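/- arXiv:2306.11836 — 7 statements merged into one kernel-verified Lean document; each statement's English description precedes it below -/
import Mathlib

section
/- The number of permutations of [n] ending with k that have exactly m r-descents equals the number of permutations of [n] ending with k that have exactly m r-excedances. -/
/-- Number of `r`-descents of a permutation `σ` of `[n]` (positions `i < n` with
`σ(i) ≥ σ(i+1) + r`), encoded on `Fin n`. -/
def rDesc (n r : ℕ) (σ : Equiv.Perm (Fin n)) : ℕ :=
  (Finset.univ.filter fun i : Fin n =>
    (if h : (i : ℕ) + 1 < n then ((σ ⟨(i : ℕ) + 1, h⟩ : Fin n) : ℕ) else n) + r ≤ (σ i : ℕ)).card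

/-- Number of `r`-excedances of a permutation `σ` of `[n]` (positions `i ≤ n` with
`σ(i) ≥ i + r`), encoded on `Fin n`. -/
def rExc (n r : ℕ) (σ : Equiv.Perm (Fin n)) : ℕ :=
  (Finset.univ.filter fun i : Fin n => (i : ℕ) + r ≤ (σ i : ℕ)).card

/-- The last value `σ(n)` of a permutation of `[n]` (as an element of `{1,…,n}`). -/
def lastVal (n : ℕ) (σ : Equiv.Perm (Fin n)) : ℕ :=
  if h : 0 < n then ((σ ⟨n - 1, Nat.sub_lt h Nat.one_pos⟩ : Fin n) : ℕ) + 1 else 0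

/-- `Ar r n m k` = number of permutations of `[n]` with exactly `m` `r`-descents
whose last value is `k`. -/
def Ar (r n m k : ℕ) : ℕ :=
  (Finset.univ.filter fun σ : Equiv.Perm (Fin n) => rDesc n r σ = m ∧ lastVal n σ = k).card

/-!
Write `σ⁻¹` in Foata's standard cycle form (each cycle starting at its largest element, cycles
in increasing order of their largest elements) and erase the parentheses. In the resulting word,
a letter `b` following `a` inside a cycle is `σ⁻¹ a`, so an `r`-descent `a ≥ b + r` is exactly an
`r`-excedance of `σ` at `b`. A letter opening a new cycle exceeds everything before it, so there
is no descent in front of it, and the letter `a` closing the previous cycle satisfies `a ≤ σ⁻¹ a`,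
so `σ` has no excedance at `σ⁻¹ a`. The last letter `a` closes the cycle of `n`, hence
`σ⁻¹ a = n`, i.e. the word ends with `σ(n)`. The cycles can be read off the word (their leaders
are its left-to-right maxima), so `σ ↦ word` is a bijection of the permutations of `[n]`.
-/

open Function Finset

theorem List.append_inj_of_notMem_of_mem_head? {α : Type*} [DecidableEq α]
    {l₁ l₂ r₁ r₂ : List α} {a : α} (h : l₁ ++ r₁ = l₂ ++ r₂) (h₁ : a ∉ l₁) (h₂ : a ∉ l₂)
    (hr₁ : a ∈ r₁.head?) (hr₂ : a ∈ r₂.head?) : l₁ = l₂ ∧ r₁ = r₂ := by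
  refine List.append_inj h ?_
  obtain ⟨r₁, rfl⟩ := List.head?_eq_some_iff.1 hr₁
  obtain ⟨r₂, rfl⟩ := List.head?_eq_some_iff.1 hr₂
  simpa [List.idxOf_append_of_notMem, h₁, h₂] using congrArg (List.idxOf a) h

namespace Equiv.Perm

variable {α : Type*}

noncomputable def cycleBlock (φ : Perm α) (a : α) : List α :=
  List.iterate φ a (minimalPeriod φ a)

section CycleBlock

variable (φ : Perm α) (a : α) {x : α}

theorem nodup_cycleBlock : (φ.cycleBlock a).Nodup := by
  rw [cycleBlock, ← List.range_map_iterate]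
  exact List.nodup_range.map_on fun i hi j hj h =>
    iterate_injOn_Iio_minimalPeriod (List.mem_range.1 hi) (List.mem_range.1 hj) h

theorem isChain_cycleBlock : (φ.cycleBlock a).IsChain fun x y => φ x = y := by
  rw [List.isChain_iff_getElem]
  intro i hi
  simp [cycleBlock, iterate_succ_apply']

theorem cycleBlock_subset {s : Set α} (hs : Set.MapsTo φ s s) (ha : a ∈ s) :
    ∀ x ∈ φ.cycleBlock a, x ∈ s := by
  simp only [cycleBlock, List.mem_iterate]
  rintro x ⟨j, -, rfl⟩
  exact hs.iterate j ha

theorem next_cycleBlock [DecidableEq α] (hx : x ∈ φ.cycleBlock a) :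
    (φ.cycleBlock a).next x hx = φ x := by
  obtain ⟨j, hj, rfl⟩ := List.getElem_of_mem hx
  rw [List.next_getElem _ (φ.nodup_cycleBlock a)]
  simp only [cycleBlock, List.getElem_iterate, List.length_iterate, iterate_mod_minimalPeriod_eq,
    iterate_succ_apply']

theorem eqOn_of_cycleBlock_eq [DecidableEq α] {ψ : Perm α}
    (h : φ.cycleBlock a = ψ.cycleBlock a) (hx : x ∈ φ.cycleBlock a) : φ x = ψ x := by
  rw [← φ.next_cycleBlock a hx, ← ψ.next_cycleBlock a (h ▸ hx)]
  simp [h]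

variable [Finite α]

theorem minimalPeriod_pos : 0 < minimalPeriod φ a :=
  minimalPeriod_pos_of_mem_periodicPts (φ.injective.mem_periodicPts a)

theorem head?_cycleBlock : (φ.cycleBlock a).head? = some a := by
  obtain ⟨p, hp⟩ := Nat.exists_eq_add_one_of_ne_zero (φ.minimalPeriod_pos a).ne'
  simp [cycleBlock, hp, List.iterate]

theorem mem_cycleBlock : x ∈ φ.cycleBlock a ↔ φ.SameCycle a x := by
  simp only [cycleBlock, List.mem_iterate]
  constructor
  · rintro ⟨j, -, rfl⟩
    exact ⟨j, by simp [zpow_natCast, coe_pow]⟩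
  · intro h
    obtain ⟨j, rfl⟩ := h.exists_nat_pow_eq
    exact ⟨j % minimalPeriod φ a, Nat.mod_lt _ (φ.minimalPeriod_pos a),
      by rw [iterate_mod_minimalPeriod_eq, coe_pow]⟩

theorem mem_cycleBlock_self : a ∈ φ.cycleBlock a :=
  (φ.mem_cycleBlock a).2 SameCycle.rfl

theorem apply_mem_cycleBlock : φ x ∈ φ.cycleBlock a ↔ x ∈ φ.cycleBlock a := by
  simp only [mem_cycleBlock, sameCycle_apply_right]

theorem apply_getLast?_cycleBlock : ∀ x ∈ (φ.cycleBlock a).getLast?, φ x = a := by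
  intro x hx
  rw [List.getLast?_eq_getElem?, Option.mem_def, List.getElem?_eq_some_iff] at hx
  obtain ⟨h, rfl⟩ := hx
  simp only [cycleBlock, List.getElem_iterate, List.length_iterate, ← iterate_succ_apply' φ,
    Nat.succ_eq_add_one, Nat.sub_add_cancel (φ.minimalPeriod_pos a), iterate_minimalPeriod]

theorem sdiff_cycleBlock_ssubset [DecidableEq α] {s : Finset α} (ha : a ∈ s) :
    s \ (φ.cycleBlock a).toFinset ⊂ s :=
  (ssubset_iff_of_subset sdiff_subset).2 ⟨a, ha, by simp [mem_cycleBlock_self]⟩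

theorem mapsTo_sdiff_cycleBlock [DecidableEq α] {s : Finset α} (hs : Set.MapsTo φ s s) (a : α) :
    Set.MapsTo φ ↑(s \ (φ.cycleBlock a).toFinset) ↑(s \ (φ.cycleBlock a).toFinset) := by
  intro x hx
  simp only [mem_coe, mem_sdiff, List.mem_toFinset, apply_mem_cycleBlock] at hx ⊢
  exact ⟨hs hx.1, hx.2⟩

end CycleBlock

/-- For `φ`-invariant `s`: the cycles of `φ` in `s`, each written from its largest element on,
concatenated in increasing order of these largest elements (Foata's standard form with the
parentheses erased). -/
noncomputable def cycleWord [LinearOrder α] [Finite α] (φ : Perm α) (s : Finset α) : List α :=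
  if h : s.Nonempty then
    cycleWord φ (s \ (φ.cycleBlock (s.max' h)).toFinset) ++ φ.cycleBlock (s.max' h)
  else []
termination_by s.card
decreasing_by exact card_lt_card (φ.sdiff_cycleBlock_ssubset _ (s.max'_mem h))

section CycleWord

variable [LinearOrder α] [Finite α] (φ : Perm α)

theorem cycleWord_empty : φ.cycleWord ∅ = [] := by
  rw [cycleWord, dif_neg Finset.not_nonempty_empty]

theorem cycleWord_of_nonempty {s : Finset α} (h : s.Nonempty) :
    φ.cycleWord s =
      φ.cycleWord (s \ (φ.cycleBlock (s.max' h)).toFinset) ++ φ.cycleBlock (s.max' h) := by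
  rw [cycleWord, dif_pos h]

theorem mem_cycleWord {s : Finset α} (hs : Set.MapsTo φ s s) {x : α} :
    x ∈ φ.cycleWord s ↔ x ∈ s := by
  induction s using Finset.strongInduction with | H s ih =>
  rcases s.eq_empty_or_nonempty with rfl | h
  · simp [cycleWord_empty]
  have hsub := φ.cycleBlock_subset (s.max' h) hs (s.max'_mem h)
  rw [cycleWord_of_nonempty φ h, List.mem_append,
    ih _ (φ.sdiff_cycleBlock_ssubset _ (s.max'_mem h)) (φ.mapsTo_sdiff_cycleBlock hs _),
    mem_sdiff, List.mem_toFinset]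
  have := hsub x
  tauto

theorem nodup_cycleWord {s : Finset α} (hs : Set.MapsTo φ s s) : (φ.cycleWord s).Nodup := by
  induction s using Finset.strongInduction with | H s ih =>
  rcases s.eq_empty_or_nonempty with rfl | h
  · simp [cycleWord_empty]
  have hs' := φ.mapsTo_sdiff_cycleBlock hs (s.max' h)
  rw [cycleWord_of_nonempty φ h]
  refine (ih _ (φ.sdiff_cycleBlock_ssubset _ (s.max'_mem h)) hs').append
    (φ.nodup_cycleBlock _) fun x hx => ?_
  exact List.mem_toFinset.not.1 (mem_sdiff.1 ((φ.mem_cycleWord hs').1 hx)).2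

theorem isGreatest_apply_getLast?_cycleWord (s : Finset α) :
    ∀ x ∈ (φ.cycleWord s).getLast?, IsGreatest (s : Set α) (φ x) := by
  rcases s.eq_empty_or_nonempty with rfl | h
  · simp [cycleWord_empty]
  intro x hx
  rw [cycleWord_of_nonempty φ h,
    List.getLast?_append_of_ne_nil _ (List.ne_nil_of_mem (φ.mem_cycleBlock_self _))] at hx
  rw [φ.apply_getLast?_cycleBlock _ x hx]
  exact s.isGreatest_max' h

theorem isChain_cycleWord {s : Finset α} (hs : Set.MapsTo φ s s) :
    (φ.cycleWord s).IsChain fun x y => φ x = y ∨ x ≤ φ x ∧ x < y := by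
  induction s using Finset.strongInduction with | H s ih =>
  rcases s.eq_empty_or_nonempty with rfl | h
  · simp [cycleWord_empty]
  have hs' := φ.mapsTo_sdiff_cycleBlock hs (s.max' h)
  rw [cycleWord_of_nonempty φ h]
  refine (ih _ (φ.sdiff_cycleBlock_ssubset _ (s.max'_mem h)) hs').append
    ((φ.isChain_cycleBlock _).imp fun _ _ => Or.inl) fun x hx y hy => Or.inr ?_
  rw [φ.head?_cycleBlock, Option.mem_some_iff] at hy
  subst hy
  have hx' : x ∈ s \ (φ.cycleBlock (s.max' h)).toFinset :=
    (φ.mem_cycleWord hs').1 (List.mem_of_getLast? hx)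
  refine ⟨(φ.isGreatest_apply_getLast?_cycleWord _ x hx).2 hx', ?_⟩
  rw [mem_sdiff, List.mem_toFinset] at hx'
  exact lt_of_le_of_ne (s.le_max' x hx'.1) fun e => hx'.2 (e ▸ φ.mem_cycleBlock_self _)

theorem eqOn_of_cycleWord_eq {ψ : Perm α} {s : Finset α} (hφ : Set.MapsTo φ s s)
    (hψ : Set.MapsTo ψ s s) (h : φ.cycleWord s = ψ.cycleWord s) : ∀ x ∈ s, φ x = ψ x := by
  induction s using Finset.strongInduction with | H s ih =>
  rcases s.eq_empty_or_nonempty with rfl | hne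
  · simp
  rw [cycleWord_of_nonempty φ hne, cycleWord_of_nonempty ψ hne] at h
  have hms : s.max' hne ∈ s := s.max'_mem hne
  generalize s.max' hne = m at h hms
  have hφ' := φ.mapsTo_sdiff_cycleBlock hφ m
  have hψ' := ψ.mapsTo_sdiff_cycleBlock hψ m
  obtain ⟨hpre, hblock⟩ := List.append_inj_of_notMem_of_mem_head? h
    (by simp [φ.mem_cycleWord hφ', φ.mem_cycleBlock_self])
    (by simp [ψ.mem_cycleWord hψ', ψ.mem_cycleBlock_self])
    (φ.head?_cycleBlock m) (ψ.head?_cycleBlock m)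
  rw [← hblock] at hψ' hpre
  intro x hx
  by_cases hxm : x ∈ φ.cycleBlock m
  · exact φ.eqOn_of_cycleBlock_eq m hblock hxm
  · exact ih _ (φ.sdiff_cycleBlock_ssubset m hms) hφ' hψ' hpre x (by simp [hx, hxm])

end CycleWord

section Univ

variable [Fintype α] (φ : Perm α)

theorem mapsTo_univ : Set.MapsTo φ (univ : Finset α) (univ : Finset α) :=
  fun _ _ => mem_coe.2 (mem_univ _)

variable [LinearOrder α]

theorem mem_cycleWord_univ (x : α) : x ∈ φ.cycleWord univ :=
  (φ.mem_cycleWord φ.mapsTo_univ).2 (mem_univ x)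

theorem length_cycleWord_univ : (φ.cycleWord univ).length = Fintype.card α := by
  simpa using Fintype.card_congr
    ((φ.nodup_cycleWord φ.mapsTo_univ).getEquivOfForallMemList _ φ.mem_cycleWord_univ)

theorem cycleWord_univ_injective : Injective fun φ : Perm α => φ.cycleWord univ := by
  intro φ ψ h
  ext x
  rw [φ.eqOn_of_cycleWord_eq φ.mapsTo_univ ψ.mapsTo_univ h x (mem_univ x)]

end Univ

end Equiv.Perm

open Equiv Perm

variable {n : ℕ}

noncomputable def foataTransform (φ : Perm (Fin n)) : Perm (Fin n) :=
  (finCongr (by simp [length_cycleWord_univ])).trans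
    ((φ.nodup_cycleWord φ.mapsTo_univ).getEquivOfForallMemList _ φ.mem_cycleWord_univ)

theorem foataTransform_apply (φ : Perm (Fin n)) (i : Fin n) :
    foataTransform φ i = (φ.cycleWord univ)[(i : ℕ)]'(by simp [length_cycleWord_univ]) :=
  rfl

theorem foataTransform_injective : Injective (foataTransform (n := n)) := by
  intro φ ψ h
  refine cycleWord_univ_injective (List.ext_getElem (by simp [length_cycleWord_univ]) ?_)
  intro i hφ hψ
  have hi : i < n := by simpa [length_cycleWord_univ] using hφ
  simpa [foataTransform_apply] using DFunLike.congr_fun h ⟨i, hi⟩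

theorem val_apply_foataTransform_of_add_one_eq (φ : Perm (Fin n)) (i : Fin n)
    (hi : (i : ℕ) + 1 = n) : (φ (foataTransform φ i) : ℕ) = n - 1 := by
  have hlast : foataTransform φ i ∈ (φ.cycleWord univ).getLast? := by
    rw [List.getLast?_eq_getElem?, foataTransform_apply]
    simp only [length_cycleWord_univ, Fintype.card_fin, ← hi, Nat.add_sub_cancel]
    exact List.getElem?_eq_getElem _
  have := (φ.isGreatest_apply_getLast?_cycleWord univ _ hlast).2 (mem_univ ⟨n - 1, by omega⟩)
  rw [Fin.le_def, Fin.val_mk] at this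
  omega

theorem rDesc_foataTransform {r : ℕ} (hr : 1 ≤ r) (φ : Perm (Fin n)) :
    rDesc n r (foataTransform φ) = rExc n r φ⁻¹ := by
  -- position `i` of the word corresponds to position `φ (w i)` of `φ⁻¹`
  refine card_equiv ((foataTransform φ).trans φ) fun i => ?_
  simp only [mem_filter, mem_univ, true_and, trans_apply, Perm.coe_inv, symm_apply_apply]
  split_ifs with hi
  · obtain hφ | ⟨hle, hlt⟩ :=
      List.isChain_iff_getElem.1 (φ.isChain_cycleWord φ.mapsTo_univ) i
        (by simpa [length_cycleWord_univ] using hi)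
    · simp [foataTransform_apply, ← hφ]
    · simp only [foataTransform_apply, Fin.le_def, Fin.lt_def] at hle hlt ⊢
      omega
  · have := val_apply_foataTransform_of_add_one_eq φ i (by omega)
    simp only [foataTransform_apply] at this ⊢
    omega

theorem lastVal_foataTransform (φ : Perm (Fin n)) :
    lastVal n (foataTransform φ) = lastVal n φ⁻¹ := by
  unfold lastVal
  split_ifs with hn
  · congr 2
    rw [Perm.eq_inv_iff_eq]
    exact Fin.ext (val_apply_foataTransform_of_add_one_eq φ _ (by simp; omega))
  · rfl

theorem stmt0_general (n m r k : ℕ) (hr : 1 ≤ r) :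
    (Finset.univ.filter fun σ : Equiv.Perm (Fin n) =>
        rDesc n r σ = m ∧ lastVal n σ = k).card =
    (Finset.univ.filter fun σ : Equiv.Perm (Fin n) =>
        rExc n r σ = m ∧ lastVal n σ = k).card := by
  symm
  refine card_equiv (Equiv.ofBijective (fun σ => foataTransform σ⁻¹)
    (Finite.injective_iff_bijective.1 (foataTransform_injective.comp inv_injective))) fun σ => ?_
  simp [rDesc_foataTransform hr, lastVal_foataTransform]

/-- The number of permutations of `[n]` ending with `k` with exactly `m` `r`-descents
equals the number of permutations of `[n]` ending with `k` with exactly `m` `r`-excedances. -/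
theorem stmt0 (n m r k : ℕ) (hn : 1 ≤ n) (hm : 1 ≤ m) (hr : 1 ≤ r) (hk : 1 ≤ k)
    (hkn : k ≤ n) :
    (Finset.univ.filter fun σ : Equiv.Perm (Fin n) =>
        rDesc n r σ = m ∧ lastVal n σ = k).card =
    (Finset.univ.filter fun σ : Equiv.Perm (Fin n) =>
        rExc n r σ = m ∧ lastVal n σ = k).card :=
  stmt0_general n m r k hr
end

section
/- If σ is a permutation of [n] with σ(n) = i, then applying the Foata transform to the inverse permutation σ⁻¹ yields a permutation φ with φ(n) = i. -/
/-- The cycle of `σ` through `x`, written starting at `x`. -/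
noncomputable def cycleListAt {n : ℕ} (σ : Equiv.Perm (Fin n)) (x : Fin n) : List (Fin n) :=
  (List.range (Function.minimalPeriod (⇑σ) x)).map fun j => (⇑σ)^[j] x

/-- The word of the Foata transform of `σ`: write `σ` in canonical cycle notation (each
cycle beginning with its largest element, cycles sorted by increasing largest element)
and erase the parentheses. -/
noncomputable def foataWord {n : ℕ} (σ : Equiv.Perm (Fin n)) : List (Fin n) :=
  ((Finset.univ.filter fun x : Fin n =>
      ∀ j ∈ Finset.range n, (⇑σ)^[j] x ≤ x).sort (· ≤ ·)).flatMap (cycleListAt σ)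


/-! Since `n` is the largest letter, the cycle of `n` comes last in the canonical cycle notation
of `σ⁻¹`. Written from `n`, a cycle of `σ⁻¹` ends at the letter that `σ⁻¹` sends to `n`,
which is `σ(n)`. -/

theorem Finset.getLast?_flatMap_sort_of_isGreatest {α β : Type*} [LinearOrder α] {s : Finset α}
    {a : α} (ha : IsGreatest (s : Set α) a) (f : α → List β) (hfa : f a ≠ []) :
    ((s.sort (· ≤ ·)).flatMap f).getLast? = (f a).getLast? := by
  have hs : s.Nonempty := ⟨a, ha.1⟩
  obtain ⟨l, hl⟩ : ∃ l, s.sort (· ≤ ·) = l ++ [a] := by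
    refine ⟨(s.sort (· ≤ ·)).dropLast, ?_⟩
    have hne : s.sort (· ≤ ·) ≠ [] := List.ne_nil_of_length_pos (by simpa using hs.card_pos)
    rw [ha.unique (s.isGreatest_max' hs), Finset.max'_eq_sorted_last,
      ← List.getLast_eq_getElem hne, List.dropLast_append_getLast]
  rw [hl, List.flatMap_append, List.flatMap_singleton, List.getLast?_append_of_ne_nil _ hfa]

theorem getLast?_cycleListAt {n : ℕ} (π : Equiv.Perm (Fin n)) (x : Fin n) :
    (cycleListAt π x).getLast? = some (π⁻¹ x) := by
  obtain ⟨p, hp⟩ : ∃ p, Function.minimalPeriod π x = p + 1 :=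
    Nat.exists_eq_add_one_of_ne_zero
      (Function.minimalPeriod_pos_of_mem_periodicPts (π.injective.mem_periodicPts x)).ne'
  have hret : π (π^[p] x) = x := by
    rw [← Function.iterate_succ_apply' (⇑π), Nat.succ_eq_add_one, ← hp,
      Function.iterate_minimalPeriod]
  rw [cycleListAt, hp, List.range_succ, List.map_append, List.map_singleton,
    List.getLast?_concat, Option.some_inj, Equiv.Perm.eq_inv_iff_eq, hret]

/-- If `σ(n) = i`, then the Foata transform `φ` of `σ⁻¹` satisfies `φ(n) = i`,
i.e. the last letter of the Foata word of `σ⁻¹` is `i`. -/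
theorem stmt1 (n : ℕ) (σ : Equiv.Perm (Fin (n + 1))) (i : Fin (n + 1))
    (h : σ (Fin.last n) = i) :
    (foataWord σ⁻¹).getLast? = some i := by
  have hcycle : cycleListAt σ⁻¹ (Fin.last n) ≠ [] := by
    rw [← List.getLast?_isSome, getLast?_cycleListAt]; rfl
  rw [foataWord,
    Finset.getLast?_flatMap_sort_of_isGreatest ⟨?_, fun x _ => Fin.le_last x⟩ _ hcycle,
    getLast?_cycleListAt, inv_inv, h]
  simp [Fin.le_last]
end

section
/- For all positive integers n, m, r: A_{r+1}(n, m, 1) = A_r(n, m, n), i.e., the number of permutations of [n] with m (r+1)-descents ending in 1 equals the number of permutations of [n] with m r-descents ending in n. -/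
/-!
Write permutations in one-line notation and delete the last letter. The permutations counted by
`A_{r+1}(n, m, 1)` become the arrangements `u` of `2, …, n` such that the word `u 1` has `m`
`(r+1)`-descents; those counted by `A_r(n, m, n)` become the arrangements of `1, …, n - 1` with `m`
`r`-descents. (In the code all letters are shifted down by one, so the tail `1` is `[0]`.)
Build either family by inserting the letters in increasing order. Inserting a new maximum into a
word with `d` descents keeps `d` descents when the slot is the bottom of a descent or when the
maximum cannot descend onto the next letter, and adds one otherwise. For words of length `N`, the
slots of the second kind number `min(r, N + 1)` in both families, so both descent distributions
obey the same recurrence from the same start and therefore coincide.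
-/

open List
open scoped Finset

def descents (ρ : ℕ) : List ℕ → ℕ
  | a :: b :: l => (if b + ρ ≤ a then 1 else 0) + descents ρ (b :: l)
  | _ => 0

section Descents

variable {ρ : ℕ}

theorem descents_append_singleton_of_forall_lt {p : List ℕ} {z : ℕ} (hp : ∀ a ∈ p, a < z + ρ) :
    descents ρ (p ++ [z]) = descents ρ p := by
  induction p with
  | nil => rfl
  | cons a q ih =>
    cases q with
    | nil => simp [descents, (hp a (by simp))]
    | cons b q =>
      simp only [cons_append, descents] at ih ⊢
      rw [ih fun c hc => hp c (mem_cons_of_mem a hc)]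

theorem descents_append_singleton_bounds (p : List ℕ) (z : ℕ) :
    descents ρ p ≤ descents ρ (p ++ [z]) ∧ descents ρ (p ++ [z]) ≤ descents ρ p + 1 := by
  induction p with
  | nil => simp [descents]
  | cons a q ih =>
    cases q with
    | nil => simp only [descents, nil_append, cons_append]; split <;> omega
    | cons b q =>
      simp only [cons_append, descents] at ih ⊢
      omega

theorem descents_append_cons (p : List ℕ) (x : ℕ) (q : List ℕ) :
    descents ρ (p ++ x :: q) = descents ρ (p ++ [x]) + descents ρ (x :: q) := by
  induction p with
  | nil => simp [descents]
  | cons a p ih =>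
    cases p with
    | nil => simp [descents]
    | cons b p =>
      simp only [cons_append, descents] at ih ⊢
      omega

/-- Inserting `M` keeps the descent count iff the slot is the bottom of a descent or `M` cannot
descend onto the next letter; the identity counts both cases. -/
theorem descents_insert (p v : List ℕ) {M : ℕ} (hp : ∀ a ∈ p, a < M) :
    (descents ρ (p ++ v) ≤ descents ρ (p ++ M :: v) ∧
      descents ρ (p ++ M :: v) ≤ descents ρ (p ++ v) + 1) ∧
    (if descents ρ (p ++ M :: v) = descents ρ (p ++ v) then 1 else 0) + descents ρ p +
        descents ρ v =
      descents ρ (p ++ v) + if descents ρ (M :: v) = descents ρ v then 1 else 0 := by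
  have hM : descents ρ (p ++ M :: v) = descents ρ p + descents ρ (M :: v) := by
    rw [descents_append_cons, descents_append_singleton_of_forall_lt fun a ha => by
      have := hp a ha; omega]
  rw [hM]
  cases v with
  | nil =>
    simp only [append_nil, descents, add_zero, ↓reduceIte]
    omega
  | cons z v =>
    rw [descents_append_cons]
    simp only [descents]
    by_cases hz : z + ρ ≤ M
    · have := descents_append_singleton_bounds (ρ := ρ) p z
      simp only [hz, if_true]
      split_ifs <;> omega
    · rw [descents_append_singleton_of_forall_lt fun a ha => by have := hp a ha; omega]
      simp only [hz, ↓reduceIte, zero_add]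
      omega

/-- The prefix `p` is what makes the induction go through: unfolding `permutations'Aux` on
`y :: u` moves `y` into it. -/
theorem descents_permutations'Aux {M : ℕ} (t : List ℕ) :
    ∀ (u p : List ℕ), (∀ a ∈ p, a < M) → (∀ y ∈ u, y < M) →
    (∀ w ∈ permutations'Aux M u, descents ρ (p ++ w ++ t) = descents ρ (p ++ u ++ t) ∨
        descents ρ (p ++ w ++ t) = descents ρ (p ++ u ++ t) + 1) ∧
    (permutations'Aux M u).countP (fun w => descents ρ (p ++ w ++ t) = descents ρ (p ++ u ++ t)) +
        descents ρ p + descents ρ t =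
      descents ρ (p ++ u ++ t) + u.countP (fun y => M < y + ρ) +
        if descents ρ (M :: t) = descents ρ t then 1 else 0
  | [], p, hp, _ => by
    obtain ⟨⟨h₁, h₂⟩, h⟩ := descents_insert (ρ := ρ) p t hp
    simp only [permutations'Aux, mem_singleton, forall_eq, countP_singleton, countP_nil,
      append_assoc, singleton_append, append_nil, decide_eq_true_eq]
    refine ⟨by omega, ?_⟩
    split_ifs at h ⊢ <;> omega
  | y :: u, p, hp, hu => by
    have hpy : ∀ a ∈ p ++ [y], a < M := by
      simpa [or_imp, forall_and] using ⟨hp, hu y (mem_cons_self ..)⟩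
    obtain ⟨ih₁, ih₂⟩ := descents_permutations'Aux t u (p ++ [y]) hpy
      fun z hz => hu z (mem_cons_of_mem y hz)
    obtain ⟨⟨h₁, h₂⟩, h⟩ := descents_insert (ρ := ρ) p (y :: (u ++ t)) hp
    have hsplit := descents_append_cons (ρ := ρ) p y (u ++ t)
    simp only [permutations'Aux, mem_cons, mem_map, forall_eq_or_imp, forall_exists_index,
      and_imp, forall_apply_eq_imp_iff₂, countP_cons, countP_map, Function.comp_def]
    simp only [append_assoc, cons_append, nil_append, decide_eq_true_eq] at ih₁ ih₂ h hsplit ⊢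
    refine ⟨⟨by omega, ih₁⟩, ?_⟩
    simp only [descents] at h
    by_cases hy : M < y + ρ
    · simp only [hy, if_true, show ¬ y + ρ ≤ M by omega, if_false, zero_add] at h ⊢
      omega
    · simp only [hy, if_false, show y + ρ ≤ M by omega, if_true, add_eq_right, one_ne_zero] at h ⊢
      omega

end Descents

theorem Multiset.eq_replicate_add_replicate_succ {S : Multiset ℕ} {d : ℕ}
    (h : ∀ e ∈ S, e = d ∨ e = d + 1) :
    S = Multiset.replicate (S.count d) d +
      Multiset.replicate (Multiset.card S - S.count d) (d + 1) := by
  have hS := Multiset.filter_add_not (· = d) S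
  rw [Multiset.filter_eq'] at hS
  have hrest : S.filter (¬ · = d) = Multiset.replicate (Multiset.card S - S.count d) (d + 1) := by
    refine Multiset.eq_replicate.mpr ⟨?_, fun e he => ?_⟩
    · have := congrArg Multiset.card hS
      rw [Multiset.card_add, Multiset.card_replicate] at this
      omega
    · rw [Multiset.mem_filter] at he
      exact (h e he.1).resolve_left he.2
  rw [← hrest, hS]

/-- Inserting a new maximum into the `L + 1` slots of a word with `d` descents keeps `d` descents
in `d + s` of the slots and creates one more in the others. -/
def insertionFiber (L s d : ℕ) : Multiset ℕ :=
  Multiset.replicate (d + s) d + Multiset.replicate (L + 1 - (d + s)) (d + 1)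

def descentMultiset (ρ : ℕ) (t B : List ℕ) : Multiset ℕ :=
  (B.permutations'.map fun u => descents ρ (u ++ t) : List ℕ)

section Recurrence

variable {ρ : ℕ}

theorem map_permutations'Aux_descents {M : ℕ} {u t : List ℕ} (hu : ∀ y ∈ u, y < M)
    (ht : descents ρ t = 0) :
    ((permutations'Aux M u).map fun w => descents ρ (w ++ t) : Multiset ℕ) =
      insertionFiber u.length (u.countP (fun y => M < y + ρ) +
        if descents ρ (M :: t) = 0 then 1 else 0) (descents ρ (u ++ t)) := by
  obtain ⟨h₁, h₂⟩ := descents_permutations'Aux (ρ := ρ) t u [] (by simp) hu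
  simp only [nil_append, ht, descents, add_zero] at h₁ h₂
  refine (Multiset.eq_replicate_add_replicate_succ (d := descents ρ (u ++ t)) ?_).trans ?_
  · simpa using h₁
  rw [insertionFiber, Multiset.coe_count, count, countP_map, Multiset.coe_card, length_map,
    length_permutations'Aux]
  simp only [Function.comp_def, _root_.beq_eq_decide]
  rw [h₂, add_assoc]

theorem descentMultiset_cons {M : ℕ} {t B : List ℕ} (hB : ∀ y ∈ B, y < M)
    (ht : descents ρ t = 0) :
    descentMultiset ρ t (M :: B) = (descentMultiset ρ t B).bind (insertionFiber B.length
      (B.countP (fun y => M < y + ρ) + if descents ρ (M :: t) = 0 then 1 else 0)) := by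
  rw [descentMultiset, descentMultiset, permutations', map_flatMap, ← Multiset.coe_bind,
    ← Multiset.map_coe, Multiset.bind_map]
  refine Multiset.bind_congr fun u hu => ?_
  have hperm : u ~ B := mem_permutations'.mp hu
  rw [map_permutations'Aux_descents (fun y hy => hB y (hperm.subset hy)) ht, hperm.length_eq,
    hperm.countP_eq]

end Recurrence

theorem countP_range_lt_add (K c N : ℕ) :
    (List.range N).countP (fun y => K < y + c) = N - (K + 1 - c) := by
  induction N with
  | zero => simp
  | succ N ih =>
    rw [range_succ, countP_append, ih, countP_singleton]
    split_ifs with h <;> simp only [decide_eq_true_eq] at h <;> omega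

theorem descentMultiset_shifted_eq {r : ℕ} (hr : 1 ≤ r) (N : ℕ) :
    descentMultiset (r + 1) [0] ((List.range N).reverse.map (· + 1)) =
      descentMultiset r [] (List.range N).reverse := by
  induction N with
  | zero => rfl
  | succ N ih =>
    simp only [range_succ, reverse_append, reverse_singleton, singleton_append, map_cons]
    rw [descentMultiset_cons (by simp) rfl, descentMultiset_cons (by simp) rfl, ih, length_map]
    congr 2
    have hshift : ∀ y, N + 1 < y + 1 + (r + 1) ↔ N < y + (r + 1) := by omega
    simp only [countP_map, countP_reverse, Function.comp_def, hshift, countP_range_lt_add]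
    have h₁ : descents (r + 1) [N + 1, 0] = if r ≤ N then 1 else 0 := by
      simp [descents]
    rw [h₁, show descents r [N] = 0 from rfl]
    by_cases h : r ≤ N <;> simp only [h, ↓reduceIte, one_ne_zero] <;> omega

def oneLine {n : ℕ} (σ : Equiv.Perm (Fin n)) : List ℕ :=
  List.ofFn fun i => (σ i : ℕ)

section OneLine

variable {n : ℕ}

theorem oneLine_injective : Function.Injective (oneLine (n := n)) := fun _ _ h =>
  Equiv.ext fun i => Fin.val_injective (congrFun (List.ofFn_injective h) i)

theorem oneLine_perm_range (σ : Equiv.Perm (Fin n)) : oneLine σ ~ List.range n := by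
  have h := σ.ofFn_comp_perm Fin.val
  rwa [ofFn_eq_map (f := Fin.val), map_coe_finRange_eq_range] at h

theorem map_oneLine_univ :
    (Finset.univ : Finset (Equiv.Perm (Fin n))).val.map oneLine = (List.range n).permutations := by
  refine Multiset.eq_of_le_of_card_le ?_ ?_
  · refine (Multiset.le_iff_subset (Multiset.Nodup.map oneLine_injective Finset.univ.nodup)).mpr ?_
    intro w hw
    obtain ⟨σ, -, rfl⟩ := Multiset.mem_map.mp hw
    exact mem_permutations.mpr (oneLine_perm_range σ)
  · simp [Fintype.card_perm, length_permutations]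

theorem card_filter_oneLine (P : List ℕ → Prop) [DecidablePred P] :
    #{σ : Equiv.Perm (Fin n) | P (oneLine σ)} = (List.range n).permutations.countP (P ·) := by
  rw [Finset.card_def, Finset.filter_val, ← Multiset.countP_map, map_oneLine_univ,
    Multiset.coe_countP]

theorem descents_ofFn (ρ : ℕ) : ∀ {n : ℕ} (f : Fin (n + 1) → ℕ),
    descents ρ (List.ofFn f) = #{i : Fin n | f i.succ + ρ ≤ f i.castSucc}
  | 0, f => by simp [descents]
  | n + 1, f => by
    have hcons : descents ρ (List.ofFn f) =
        (if f 1 + ρ ≤ f 0 then 1 else 0) + descents ρ (List.ofFn fun i => f i.succ) := by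
      rw [ofFn_succ (f := f), ofFn_succ (f := fun i => f i.succ)]
      rfl
    rw [hcons, descents_ofFn ρ (fun i => f i.succ), Fin.card_filter_univ_succ']
    simp only [Fin.succ_castSucc, Fin.succ_zero_eq_one, Fin.castSucc_zero]
    rfl

theorem rDesc_eq_descents (r : ℕ) (σ : Equiv.Perm (Fin n)) :
    rDesc n r σ = descents r (oneLine σ) := by
  cases n with
  | zero => rfl
  | succ n =>
    rw [rDesc, Finset.card_filter, Fin.sum_univ_castSucc, oneLine, descents_ofFn,
      Finset.card_filter]
    have hlast : ¬ n + 1 + r ≤ (σ (Fin.last n) : ℕ) := by have := (σ (Fin.last n)).isLt; omega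
    simp only [Fin.val_castSucc, Fin.val_last, Fin.is_lt, add_lt_add_iff_right, lt_self_iff_false,
      ↓reduceDIte, hlast, ↓reduceIte, add_zero]
    rfl

theorem lastVal_eq_succ_iff (σ : Equiv.Perm (Fin n)) (k : ℕ) :
    lastVal n σ = k + 1 ↔ (oneLine σ).getLast? = some k := by
  cases n with
  | zero => simp [lastVal, oneLine]
  | succ n =>
    rw [oneLine, ofFn_succ_last]
    simp [lastVal, Fin.last]

end OneLine

theorem filter_getLast?_permutations'Aux {α : Type*} [DecidableEq α] {x : α} :
    ∀ {u : List α}, x ∉ u →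
      (permutations'Aux x u).filter (·.getLast? = some x) = [u ++ [x]]
  | [], _ => by simp [permutations'Aux]
  | y :: u, hx => by
    have hxy : y ≠ x := fun h => hx (h ▸ mem_cons_self ..)
    have hlast : ∀ w : List α, (y :: w).getLast? = some x ↔ w.getLast? = some x := fun w => by
      rw [getLast?_cons]
      cases w.getLast? <;> simp [hxy]
    rw [permutations'Aux, filter_cons, filter_map, if_neg]
    · simp only [Function.comp_def, hlast]
      rw [filter_getLast?_permutations'Aux (fun h => hx (mem_cons_of_mem y h))]
      rfl
    · simpa [hlast] using fun h => hx (mem_of_getLast? h)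

theorem countP_permutations'_cons_getLast? {α : Type*} [DecidableEq α] (P : List α → Prop)
    [DecidablePred P] {x : α} {B : List α} (hx : x ∉ B) :
    (permutations' (x :: B)).countP (fun w => P w ∧ w.getLast? = some x) =
      (permutations' B).countP (fun u => P (u ++ [x])) := by
  have hfilter : (permutations' (x :: B)).filter (·.getLast? = some x) =
      (permutations' B).map (· ++ [x]) := by
    rw [permutations', filter_flatMap, map_eq_flatMap]
    exact flatMap_congr fun u hu => filter_getLast?_permutations'Aux fun h =>
      hx ((mem_permutations'.mp hu).subset h)
  have := congrArg (countP (P ·)) hfilter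
  rw [countP_filter, countP_map] at this
  simpa [Function.comp_def] using this

theorem Ar_succ_eq_countP (ρ n m k : ℕ) :
    Ar ρ n m (k + 1) = (List.range n).permutations.countP
      (fun w => descents ρ w = m ∧ w.getLast? = some k) := by
  rw [Ar, ← card_filter_oneLine]
  simp only [rDesc_eq_descents, lastVal_eq_succ_iff]

theorem Ar_succ_eq_count {ρ n m k : ℕ} {B : List ℕ} (hB : List.range n ~ k :: B) :
    Ar ρ n m (k + 1) = (descentMultiset ρ [k] B).count m := by
  have hk : k ∉ B := (nodup_cons.mp (hB.nodup_iff.mp nodup_range)).1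
  rw [Ar_succ_eq_countP, (hB.permutations.trans (permutations_perm_permutations' _)).countP_eq,
    countP_permutations'_cons_getLast? _ hk, descentMultiset, Multiset.coe_count, count,
    countP_map]
  simp only [Function.comp_def, _root_.beq_eq_decide, eq_comm]

theorem descentMultiset_singleton_of_forall_lt {ρ x : ℕ} {B : List ℕ} (hB : ∀ y ∈ B, y < x + ρ) :
    descentMultiset ρ [x] B = descentMultiset ρ [] B := by
  rw [descentMultiset, descentMultiset, map_congr_left fun u hu => ?_]
  rw [append_nil, descents_append_singleton_of_forall_lt fun y hy =>
    hB y ((mem_permutations'.mp hu).subset hy)]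

theorem stmt4_general (n m r : ℕ) (hn : 1 ≤ n) (hr : 1 ≤ r) :
    Ar (r + 1) n m 1 = Ar r n m n := by
  obtain ⟨N, rfl⟩ : ∃ N, n = N + 1 := ⟨n - 1, by omega⟩
  have h₁ : List.range (N + 1) ~ 0 :: (List.range N).reverse.map (· + 1) := by
    rw [range_succ_eq_map]
    exact ((reverse_perm _).map _).symm.cons 0
  have h₀ : List.range (N + 1) ~ N :: (List.range N).reverse := by
    simpa [range_succ] using (reverse_perm (List.range (N + 1))).symm
  refine (Ar_succ_eq_count h₁).trans (Eq.trans ?_ (Ar_succ_eq_count h₀).symm)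
  have hlt : ∀ y ∈ (List.range N).reverse, y < N + r := fun y hy => by
    rw [mem_reverse, mem_range] at hy
    omega
  rw [descentMultiset_singleton_of_forall_lt hlt, descentMultiset_shifted_eq hr]

/-- `A_{r+1}(n,m,1) = A_r(n,m,n)` for positive `n, m, r`. -/
theorem stmt4 (n m r : ℕ) (hn : 1 ≤ n) (hm : 1 ≤ m) (hr : 1 ≤ r) :
    Ar (r + 1) n m 1 = Ar r n m n :=
  stmt4_general n m r hn hr
end

section
/- The number of permutations of [n] with m (r+1)-excedances ending in 1 equals the number of permutations of [n] with m r-excedances ending in n: the map sending σ to φ with φ(n) = n and φ(i) = σ(i) − 1 for i < n is a bijection between these sets. -/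
/-- The map sending `σ` to the function `φ` with `φ(n) = n` and `φ(i) = σ(i) - 1` for
`i < n`, encoded on `Fin n`. -/
def shiftMap (n : ℕ) (σ : Equiv.Perm (Fin n)) : Fin n → Fin n :=
  fun i =>
    if (i : ℕ) = n - 1 then i
    else ⟨(σ i : ℕ) - 1, lt_of_le_of_lt (Nat.sub_le _ _) (σ i).isLt⟩

/-!
When `σ(n) = 1`, the map `σ ↦ φ` is left multiplication by `ρ⁻¹`, where `ρ = finRotate n` is the
cyclic shift `i ↦ i + 1 (mod n)`; its inverse is `φ ↦ ρ φ`, and `σ(n) = 1` exactly when `φ`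
fixes `n`. Lowering every value outside position `n` by one turns `(r+1)`-excedances into
`r`-excedances, and since `r ≥ 1` position `n` is an excedance of neither permutation.
-/

open Equiv

section
variable {k : ℕ}

lemma lastVal_succ (σ : Perm (Fin (k + 1))) : lastVal (k + 1) σ = σ (Fin.last k) + 1 := by
  simp [lastVal, Fin.last]

lemma lastVal_succ_eq_one_iff {σ : Perm (Fin (k + 1))} :
    lastVal (k + 1) σ = 1 ↔ σ (Fin.last k) = 0 := by
  rw [lastVal_succ, Nat.add_eq_right, Fin.ext_iff, Fin.val_zero]

lemma lastVal_succ_eq_self_iff {φ : Perm (Fin (k + 1))} :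
    lastVal (k + 1) φ = k + 1 ↔ φ (Fin.last k) = Fin.last k := by
  rw [lastVal_succ, Nat.add_right_cancel_iff, Fin.ext_iff, Fin.val_last]

lemma finRotate_mul_apply_last_eq_zero_iff {φ : Perm (Fin (k + 1))} :
    (finRotate (k + 1) * φ) (Fin.last k) = 0 ↔ φ (Fin.last k) = Fin.last k := by
  rw [Perm.mul_apply, ← finRotate_last, (finRotate _).injective.eq_iff]

lemma exists_finRotate_mul_eq {σ : Perm (Fin (k + 1))} (hσ : σ (Fin.last k) = 0) :
    ∃ φ : Perm (Fin (k + 1)), φ (Fin.last k) = Fin.last k ∧ finRotate (k + 1) * φ = σ :=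
  ⟨(finRotate (k + 1))⁻¹ * σ,
    finRotate_mul_apply_last_eq_zero_iff.1 (by rwa [mul_inv_cancel_left]), mul_inv_cancel_left _ _⟩

lemma shiftMap_finRotate_mul {φ : Perm (Fin (k + 1))} (hφ : φ (Fin.last k) = Fin.last k) :
    shiftMap (k + 1) (finRotate (k + 1) * φ) = φ := by
  funext i
  by_cases hi : i = Fin.last k
  · subst hi
    simp [shiftMap, hφ]
  · have hφi : φ i ≠ Fin.last k := hφ ▸ φ.injective.ne hi
    have hik : (i : ℕ) ≠ k := by simpa [Fin.ext_iff] using hi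
    ext
    rw [shiftMap, if_neg (by omega), Fin.val_mk, Perm.mul_apply, coe_finRotate, if_neg hφi,
      Nat.add_sub_cancel]

lemma rExc_succ_finRotate_mul {r : ℕ} (hr : 1 ≤ r) {φ : Perm (Fin (k + 1))}
    (hφ : φ (Fin.last k) = Fin.last k) :
    rExc (k + 1) (r + 1) (finRotate (k + 1) * φ) = rExc (k + 1) r φ := by
  unfold rExc
  congr 1
  refine Finset.filter_congr fun i _ => ?_
  rw [Perm.mul_apply, coe_finRotate]
  split_ifs with hφi
  · obtain rfl : i = Fin.last k := φ.injective (hφi.trans hφ.symm)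
    simp only [hφi, Fin.val_last]
    omega
  · omega

end

theorem stmt5_general (n m r : ℕ) (hn : 1 ≤ n) (hr : 1 ≤ r) :
    Set.BijOn (shiftMap n)
      {σ : Equiv.Perm (Fin n) | rExc n (r + 1) σ = m ∧ lastVal n σ = 1}
      {f : Fin n → Fin n |
        ∃ φ : Equiv.Perm (Fin n), ⇑φ = f ∧ rExc n r φ = m ∧ lastVal n φ = n} := by
  obtain ⟨k, rfl⟩ : ∃ k, n = k + 1 := ⟨n - 1, by omega⟩
  have decompose : ∀ σ : Perm (Fin (k + 1)), rExc (k + 1) (r + 1) σ = m ∧ lastVal (k + 1) σ = 1 →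
      ∃ φ : Perm (Fin (k + 1)),
        φ (Fin.last k) = Fin.last k ∧ rExc (k + 1) r φ = m ∧ finRotate (k + 1) * φ = σ := by
    rintro σ ⟨hexc, hlast⟩
    obtain ⟨φ, hφ, rfl⟩ := exists_finRotate_mul_eq (lastVal_succ_eq_one_iff.1 hlast)
    exact ⟨φ, hφ, by rwa [rExc_succ_finRotate_mul hr hφ] at hexc, rfl⟩
  refine ⟨?_, ?_, ?_⟩
  · intro σ hσ
    obtain ⟨φ, hφ, hexc, rfl⟩ := decompose σ hσ
    exact ⟨φ, (shiftMap_finRotate_mul hφ).symm, hexc, lastVal_succ_eq_self_iff.2 hφ⟩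
  · intro σ hσ τ hτ hστ
    obtain ⟨φ, hφ, -, rfl⟩ := decompose σ hσ
    obtain ⟨ψ, hψ, -, rfl⟩ := decompose τ hτ
    rw [shiftMap_finRotate_mul hφ, shiftMap_finRotate_mul hψ] at hστ
    rw [DFunLike.coe_injective hστ]
  · rintro _ ⟨φ, rfl, hexc, hlast⟩
    have hφ := lastVal_succ_eq_self_iff.1 hlast
    refine ⟨finRotate (k + 1) * φ, ⟨?_, ?_⟩, shiftMap_finRotate_mul hφ⟩
    · rwa [rExc_succ_finRotate_mul hr hφ]
    · exact lastVal_succ_eq_one_iff.2 (finRotate_mul_apply_last_eq_zero_iff.2 hφ)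

/-- The map `σ ↦ φ`, `φ(n) = n`, `φ(i) = σ(i) - 1` for `i < n`, is a bijection from the
permutations of `[n]` with `m` `(r+1)`-excedances ending in `1` onto the permutations of
`[n]` with `m` `r`-excedances ending in `n`. -/
theorem stmt5 (n m r : ℕ) (hn : 1 ≤ n) (hm : 1 ≤ m) (hr : 1 ≤ r) :
    Set.BijOn (shiftMap n)
      {σ : Equiv.Perm (Fin n) | rExc n (r + 1) σ = m ∧ lastVal n σ = 1}
      {f : Fin n → Fin n |
        ∃ φ : Equiv.Perm (Fin n), ⇑φ = f ∧ rExc n r φ = m ∧ lastVal n φ = n} :=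
  stmt5_general n m r hn hr
end

section
/- Every function f: [n] → {0,1,...,x} lies in exactly one set S(σ) as σ ranges over permutations of [n]: namely S(σ) consists of those f with f(σ(j)) ≥ f(σ(j+1)) when j is a descent of σ and f(σ(j)) > f(σ(j+1)) otherwise, for all 1 ≤ j ≤ n−1. -/
/-- `f ∈ S(σ)`: for every position `j < n`, `f(σ(j)) ≥ f(σ(j+1))` if `j` is a descent of
`σ`, and `f(σ(j)) > f(σ(j+1))` otherwise. -/
def chainCond (n x : ℕ) (σ : Equiv.Perm (Fin n)) (f : Fin n → Fin (x + 1)) : Prop :=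
  ∀ j k : Fin n, (j : ℕ) + 1 = (k : ℕ) →
    if (σ k : ℕ) < (σ j : ℕ) then (f (σ k) : ℕ) ≤ (f (σ j) : ℕ)
    else (f (σ k) : ℕ) < (f (σ j) : ℕ)

instance (n x : ℕ) (σ : Equiv.Perm (Fin n)) (f : Fin n → Fin (x + 1)) :
    Decidable (chainCond n x σ f) := by
  unfold chainCond; infer_instance

/-!
Order `[n]` by the key `i ↦ (f i, i)`, compared lexicographically. The condition defining
`S(σ)` says precisely that this key strictly decreases along `σ(1), …, σ(n)`: ties in `f` are
allowed exactly at descents, where the second coordinate decreases. The key is injective, so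
there is exactly one permutation listing `[n]` in decreasing key order.
-/

open Function

theorem Fin.strictAnti_iff_lt_of_val_add_one_eq {n : ℕ} {α : Type*} [Preorder α]
    {g : Fin n → α} : StrictAnti g ↔ ∀ j k : Fin n, (j : ℕ) + 1 = k → g k < g j := by
  cases n with
  | zero => exact iff_of_true (fun a => a.elim0) (fun j => j.elim0)
  | succ m =>
    rw [Fin.strictAnti_iff_succ_lt]
    constructor
    · rintro h j k hjk
      obtain ⟨i, rfl, rfl⟩ : ∃ i : Fin m, i.castSucc = j ∧ i.succ = k :=
        ⟨⟨j, by omega⟩, Fin.ext rfl, Fin.ext (by simp [← hjk])⟩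
      exact h i
    · exact fun h i => h _ _ (by simp)

theorem Equiv.Perm.existsUnique_strictAnti_comp {n : ℕ} {α : Type*} [LinearOrder α]
    {g : Fin n → α} (hg : Injective g) : ∃! σ : Equiv.Perm (Fin n), StrictAnti (g ∘ σ) := by
  set σ := Tuple.sort (OrderDual.toDual ∘ g)
  have hσ : StrictAnti (g ∘ σ) :=
    (Tuple.monotone_sort (OrderDual.toDual ∘ g)).strictMono_of_injective
      (hg.comp σ.injective)
  refine ⟨σ, hσ, fun τ hτ => Equiv.ext fun i => hg ?_⟩
  exact congrFun (Tuple.unique_antitone hτ.antitone hσ.antitone) i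

def lexKey {n x : ℕ} (f : Fin n → Fin (x + 1)) (i : Fin n) : Fin (x + 1) ×ₗ Fin n :=
  toLex (f i, i)

theorem lexKey_injective {n x : ℕ} (f : Fin n → Fin (x + 1)) : Injective (lexKey f) :=
  fun _ _ h => congrArg (fun p => (ofLex p).2) h

theorem lexKey_lt_lexKey_iff {n x : ℕ} (f : Fin n → Fin (x + 1)) (a b : Fin n) :
    lexKey f b < lexKey f a ↔
      if (b : ℕ) < (a : ℕ) then (f b : ℕ) ≤ (f a : ℕ) else (f b : ℕ) < (f a : ℕ) := by
  rw [lexKey, lexKey, Prod.Lex.toLex_lt_toLex]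
  simp only [Fin.lt_def, Fin.ext_iff]
  split_ifs <;> omega

theorem chainCond_iff_strictAnti {n x : ℕ} (σ : Equiv.Perm (Fin n)) (f : Fin n → Fin (x + 1)) :
    chainCond n x σ f ↔ StrictAnti (lexKey f ∘ σ) := by
  simp only [Fin.strictAnti_iff_lt_of_val_add_one_eq, comp_apply, lexKey_lt_lexKey_iff]
  rfl

/-- Every function `f : [n] → {0,…,x}` lies in exactly one set `S(σ)` as `σ` ranges over
permutations of `[n]`. -/
theorem stmt14 (n x : ℕ) (f : Fin n → Fin (x + 1)) :
    ∃! σ : Equiv.Perm (Fin n), chainCond n x σ f := by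
  simpa only [chainCond_iff_strictAnti] using
    Equiv.Perm.existsUnique_strictAnti_comp (lexKey_injective f)
end

section
/- Worpitzky's identity: for all natural numbers n ≥ 1 and all x, x^n = Σ_{m=0}^{n−1} A(n,m) · C(x+m, n), where A(n,m) is the Eulerian number counting permutations of [n] with exactly m descents. -/
/-- `eulerian n m` = number of permutations of `[n]` with exactly `m` descents. -/
def eulerian (n m : ℕ) : ℕ :=
  (Finset.univ.filter fun σ : Equiv.Perm (Fin n) => rDesc n 1 σ = m).card

/-!
Stably sorting a word `f : [n] → [x]` gives the permutation `σ = Tuple.sort f`, characterised by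
`g = f ∘ σ` being weakly increasing and strictly increasing across every descent of `σ`; conversely
every such `g` comes from exactly one word, `g ∘ σ⁻¹`. Adding to `g j` the number of non-descents
before `j` turns these `g` into strictly increasing maps into `[x + #non-descents]`, so the fibre
over `σ` has `C(x + n - 1 - des σ, n)` elements. Complementing values (`σ ↦ rev ∘ σ`) swaps
descents and non-descents, so `x ^ n = Σ_σ C(x + des σ, n) = Σ_m A(n, m) C(x + m, n)`.
-/

open Finset

section MonotoneStrictAt

variable {n : ℕ} (S : Finset (Fin n))

def MonotoneStrictAt {α : Type*} [Preorder α] (g : Fin (n + 1) → α) : Prop :=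
  ∀ i : Fin n, if i ∈ S then g i.castSucc < g i.succ else g i.castSucc ≤ g i.succ

instance {α : Type*} [Preorder α] [DecidableLT α] [DecidableLE α] :
    DecidablePred (MonotoneStrictAt (α := α) S) := by
  unfold MonotoneStrictAt; infer_instance

def weakBelow (j : ℕ) : ℕ := #{i ∈ Sᶜ | i.val < j}

lemma weakBelow_succ (i : Fin n) :
    weakBelow S (i + 1) = weakBelow S i + if i ∈ S then 0 else 1 := by
  simp only [weakBelow, card_filter]
  have hi : (if i ∈ S then 0 else 1) = ∑ k ∈ Sᶜ, if k = i then 1 else 0 := by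
    simp [sum_ite_eq', ite_not]
  rw [hi, ← sum_add_distrib]
  refine sum_congr rfl fun k _ => ?_
  simp only [← Fin.val_inj]
  split_ifs <;> omega

lemma weakBelow_le_card_compl (j : ℕ) : weakBelow S j ≤ #Sᶜ := card_filter_le _ _

lemma weakBelow_of_le {j : ℕ} (hj : n ≤ j) : weakBelow S j = #Sᶜ := by
  rw [weakBelow, filter_true_of_mem fun i _ => by omega]

variable {S}

lemma weakBelow_le_of_strictMono {h : Fin (n + 1) → ℕ} (hh : StrictMono h) (j : Fin (n + 1)) :
    weakBelow S j ≤ h j := by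
  induction j using Fin.induction with
  | zero => simp [weakBelow]
  | succ i ih =>
    have := hh (Fin.castSucc_lt_succ (i := i))
    rw [Fin.val_castSucc] at ih
    rw [Fin.val_succ, weakBelow_succ]
    split_ifs <;> omega

lemma monotone_sub_weakBelow {h : Fin (n + 1) → ℕ} (hh : StrictMono h) :
    Monotone fun j : Fin (n + 1) => h j - weakBelow S j := by
  refine Fin.monotone_iff_le_succ.2 fun i => ?_
  have := hh (Fin.castSucc_lt_succ (i := i))
  simp only [Fin.val_succ, Fin.val_castSucc, weakBelow_succ]
  split_ifs <;> omega

lemma strictMono_add_weakBelow_iff {g : Fin (n + 1) → ℕ} :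
    StrictMono (fun j => g j + weakBelow S j) ↔ MonotoneStrictAt S g := by
  rw [Fin.strictMono_iff_lt_succ]
  refine forall_congr' fun i => ?_
  simp only [Fin.val_succ, Fin.val_castSucc, weakBelow_succ]
  split_ifs <;> omega

variable (S) in
/-- Stars and bars: shift `g` up by `weakBelow S`. The inverse is well defined because
`h - weakBelow S` is monotone, hence bounded by its value `h (last n) - #Sᶜ < x` at the end. -/
def monotoneStrictAtEquiv (x : ℕ) :
    {g : Fin (n + 1) → Fin x // MonotoneStrictAt S g} ≃ (Fin (n + 1) ↪o Fin (x + #Sᶜ)) where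
  toFun g := OrderEmbedding.ofStrictMono
    (fun j => ⟨g.1 j + weakBelow S j, by
      have := (g.1 j).isLt; have := weakBelow_le_card_compl S j; omega⟩)
    (strictMono_add_weakBelow_iff.2 g.2)
  invFun h := ⟨fun j => ⟨h j - weakBelow S j, by
      have hh := Fin.val_strictMono.comp h.strictMono
      have hmono := monotone_sub_weakBelow (S := S) hh (Fin.le_last j)
      have hlast := weakBelow_le_of_strictMono (S := S) hh (Fin.last n)
      have := (h (Fin.last n)).isLt
      simp only [Function.comp_apply, Fin.val_last, weakBelow_of_le S le_rfl] at hmono hlast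
      omega⟩, by
    have hh := Fin.val_strictMono.comp h.strictMono
    refine (strictMono_add_weakBelow_iff (g := fun j => (h j : ℕ) - weakBelow S j)).1 ?_
    convert hh using 2 with j
    exact Nat.sub_add_cancel (weakBelow_le_of_strictMono hh j)⟩
  left_inv g := by
    ext
    simp only [OrderEmbedding.ofStrictMono, OrderEmbedding.coe_ofMapLEIff, add_tsub_cancel_right]
  right_inv h := by
    ext j
    have := weakBelow_le_of_strictMono (S := S) (Fin.val_strictMono.comp h.strictMono) j
    simp only [Function.comp_apply, OrderEmbedding.ofStrictMono,
      OrderEmbedding.coe_ofMapLEIff] at this ⊢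
    omega

lemma card_monotoneStrictAt (x : ℕ) :
    Fintype.card {g : Fin (n + 1) → Fin x // MonotoneStrictAt S g} = (x + #Sᶜ).choose (n + 1) := by
  rw [Fintype.card_congr (monotoneStrictAtEquiv S x), ← Nat.card_eq_fintype_card,
    Nat.card_congr Set.powersetCard.ofFinEmbEquiv, Set.powersetCard.card, Nat.card_eq_fintype_card,
    Fintype.card_fin]

end MonotoneStrictAt

namespace Equiv.Perm

variable {n : ℕ}

def descents (σ : Perm (Fin (n + 1))) : Finset (Fin n) :=
  univ.filter fun i => σ i.succ < σ i.castSucc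

lemma sort_eq_iff {α : Type*} [LinearOrder α] (f : Fin (n + 1) → α) (σ : Perm (Fin (n + 1))) :
    Tuple.sort f = σ ↔ MonotoneStrictAt σ.descents (f ∘ σ) := by
  rw [eq_comm, Tuple.eq_sort_iff', Fin.strictMono_iff_lt_succ]
  refine forall_congr' fun i => ?_
  have hne : σ i.castSucc ≠ σ i.succ := σ.injective.ne (Fin.castSucc_lt_succ (i := i)).ne
  change toLex (f (σ i.castSucc), σ i.castSucc) < toLex (f (σ i.succ), σ i.succ) ↔ _
  simp only [Prod.Lex.toLex_lt_toLex, descents, mem_filter, mem_univ, true_and, Function.comp_apply]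
  split_ifs with hdesc
  · simp [hdesc.not_gt]
  · simp [lt_of_le_of_ne (not_lt.1 hdesc) hne, le_iff_lt_or_eq]

lemma card_sort_eq (x : ℕ) (σ : Perm (Fin (n + 1))) :
    #{f : Fin (n + 1) → Fin x | Tuple.sort f = σ} = (x + #σ.descentsᶜ).choose (n + 1) := by
  rw [← card_monotoneStrictAt, ← Fintype.card_subtype]
  exact Fintype.card_congr ((Equiv.arrowCongr σ.symm (Equiv.refl _)).subtypeEquiv
    fun f => sort_eq_iff f σ)

lemma descents_revPerm_mul (σ : Perm (Fin (n + 1))) :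
    (Fin.revPerm * σ).descents = σ.descentsᶜ := by
  ext i
  have hne : σ i.castSucc ≠ σ i.succ := σ.injective.ne (Fin.castSucc_lt_succ (i := i)).ne
  simp [descents, hne.le_iff_lt]

lemma card_descents_eq_rDesc (σ : Perm (Fin (n + 1))) : #σ.descents = rDesc (n + 1) 1 σ := by
  rw [rDesc, descents, card_filter, card_filter, Fin.sum_univ_castSucc, Fin.val_last,
    dif_neg (lt_irrefl _), if_neg (by have := (σ (Fin.last n)).isLt; omega), add_zero]
  refine sum_congr rfl fun i _ => ?_
  rw [Fin.val_castSucc, dif_pos (by omega)]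
  rfl

lemma sum_comp_card_descents {M : Type*} [AddCommMonoid M] (φ : ℕ → M) :
    ∑ σ : Perm (Fin (n + 1)), φ #σ.descents = ∑ m ∈ range (n + 1), eulerian (n + 1) m • φ m := by
  have hmaps : ∀ σ ∈ (univ : Finset (Perm (Fin (n + 1)))), #σ.descents ∈ range (n + 1) :=
    fun σ _ => mem_range.2 (Nat.lt_succ_of_le ((card_le_univ _).trans (Fintype.card_fin n).le))
  rw [← sum_fiberwise_of_maps_to hmaps]
  refine sum_congr rfl fun m _ => ?_
  rw [sum_congr rfl fun σ hσ => by rw [(mem_filter.1 hσ).2], sum_const, eulerian]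
  simp_rw [card_descents_eq_rDesc]

end Equiv.Perm

/-- Worpitzky's identity: `x^n = Σ_{m=0}^{n-1} A(n,m) C(x+m,n)` for `n ≥ 1`. -/
theorem stmt15 (n : ℕ) (hn : 1 ≤ n) (x : ℕ) :
    x ^ n = ∑ m ∈ Finset.range n, eulerian n m * Nat.choose (x + m) n := by
  obtain ⟨n, rfl⟩ := Nat.exists_eq_add_of_le' hn
  calc x ^ (n + 1)
      = ∑ σ : Equiv.Perm (Fin (n + 1)), #{f : Fin (n + 1) → Fin x | Tuple.sort f = σ} := by
        rw [← card_eq_sum_card_fiberwise fun _ _ => mem_univ _, card_univ, Fintype.card_fun,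
          Fintype.card_fin, Fintype.card_fin]
    _ = ∑ σ : Equiv.Perm (Fin (n + 1)), (x + #(Fin.revPerm * σ).descents).choose (n + 1) := by
        simp only [Equiv.Perm.card_sort_eq, Equiv.Perm.descents_revPerm_mul]
    _ = ∑ σ : Equiv.Perm (Fin (n + 1)), (x + #σ.descents).choose (n + 1) :=
        Equiv.sum_comp (Equiv.mulLeft Fin.revPerm) fun σ => (x + #σ.descents).choose (n + 1)
    _ = ∑ m ∈ Finset.range (n + 1), eulerian (n + 1) m * Nat.choose (x + m) (n + 1) := by
        simp only [Equiv.Perm.sum_comp_card_descents fun m => (x + m).choose (n + 1), smul_eq_mul]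
end

section
/- The number of permutations of [n] with exactly m descents equals the number of permutations of [n] with exactly m excedances. -/
open Equiv Finset

/-- word value of a permutation at any natural index (value `N` out of range). -/
def wval {N : ℕ} (σ : Equiv.Perm (Fin N)) (t : ℕ) : ℕ :=
  if h : t < N then ((σ ⟨t, h⟩ : Fin N) : ℕ) else N

/-- descent set -/
def DS {N : ℕ} (σ : Equiv.Perm (Fin N)) : Finset (Fin N) :=
  univ.filter fun i : Fin N => wval σ ((i : ℕ) + 1) + 1 ≤ wval σ (i : ℕ)

/-- excedance set -/
def ES {N : ℕ} (σ : Equiv.Perm (Fin N)) : Finset (Fin N) :=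
  univ.filter fun i : Fin N => (i : ℕ) + 1 ≤ (σ i : ℕ)

lemma wval_lt {N : ℕ} (σ : Equiv.Perm (Fin N)) {t : ℕ} (h : t < N) :
    wval σ t = σ ⟨t, h⟩ := dif_pos h

lemma wval_ge {N : ℕ} (σ : Equiv.Perm (Fin N)) {t : ℕ} (h : ¬ t < N) :
    wval σ t = N := dif_neg h

lemma wval_lt_of_lt {N : ℕ} (σ : Equiv.Perm (Fin N)) {t : ℕ} (h : t < N) :
    wval σ t < N := by rw [wval_lt σ h]; exact (σ ⟨t, h⟩).isLt

lemma rDesc_eq_card_DS (N : ℕ) (σ : Equiv.Perm (Fin N)) :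
    rDesc N 1 σ = (DS σ).card := by
  unfold rDesc DS
  congr 1
  apply Finset.filter_congr
  intro i _
  have h1 : wval σ (i : ℕ) = (σ i : ℕ) := by
    rw [wval_lt σ i.isLt]
  rw [h1, wval]

lemma rExc_eq_card_ES (N : ℕ) (σ : Equiv.Perm (Fin N)) :
    rExc N 1 σ = (ES σ).card := rfl

lemma mem_DS {N : ℕ} {σ : Equiv.Perm (Fin N)} {i : Fin N} :
    i ∈ DS σ ↔ wval σ ((i : ℕ) + 1) + 1 ≤ wval σ (i : ℕ) := by simp [DS]

lemma mem_ES {N : ℕ} {σ : Equiv.Perm (Fin N)} {i : Fin N} :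
    i ∈ ES σ ↔ (i : ℕ) + 1 ≤ (σ i : ℕ) := by simp [ES]

lemma DS_lt {N : ℕ} {σ : Equiv.Perm (Fin N)} {y : Fin N} (h : y ∈ DS σ) :
    (y : ℕ) + 1 < N := by
  rw [mem_DS] at h
  have h2 := wval_lt_of_lt σ y.isLt
  by_contra hc
  rw [wval_ge σ hc] at h
  omega

/-- Insert the max value `n` at position `j` into the one-line word of `σ'`. -/
def gP (n : ℕ) (j : Fin (n + 1)) (σ' : Equiv.Perm (Fin n)) : Equiv.Perm (Fin (n + 1)) :=
  (finSuccEquiv' j).trans (σ'.optionCongr.trans finSuccEquivLast.symm)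

/-- Insert the point `n` into the cycle structure of `σ'`, sending `n` to `y` (if `y = n`
this adds a fixed point). -/
def hP (n : ℕ) (y : Fin (n + 1)) (σ' : Equiv.Perm (Fin n)) : Equiv.Perm (Fin (n + 1)) :=
  finSuccEquivLast.trans
    ((σ'.optionCongr.trans (Equiv.swap none (finSuccEquivLast y))).trans finSuccEquivLast.symm)

lemma gP_apply_self (n : ℕ) (j : Fin (n + 1)) (σ' : Equiv.Perm (Fin n)) :
    gP n j σ' j = Fin.last n := by
  simp [gP]

lemma gP_apply_succAbove (n : ℕ) (j : Fin (n + 1)) (σ' : Equiv.Perm (Fin n)) (y : Fin n) :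
    gP n j σ' (j.succAbove y) = (σ' y).castSucc := by
  simp [gP]

lemma hP_apply_last (n : ℕ) (y : Fin (n + 1)) (σ' : Equiv.Perm (Fin n)) :
    hP n y σ' (Fin.last n) = y := by
  simp [hP]

lemma hP_apply_castSucc_eq (n : ℕ) (y : Fin (n + 1)) (σ' : Equiv.Perm (Fin n)) (b : Fin n)
    (h : (σ' b).castSucc = y) : hP n y σ' b.castSucc = Fin.last n := by
  simp [hP, ← h]

lemma hP_apply_castSucc_ne (n : ℕ) (y : Fin (n + 1)) (σ' : Equiv.Perm (Fin n)) (b : Fin n)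
    (h : (σ' b).castSucc ≠ y) : hP n y σ' b.castSucc = (σ' b).castSucc := by
  have h2 : (some (σ' b) : Option (Fin n)) ≠ finSuccEquivLast y := by
    rw [← finSuccEquivLast_castSucc (σ' b)]
    exact fun hc => h (finSuccEquivLast.injective hc)
  have h3 : (swap none (finSuccEquivLast y)) (some (σ' b)) = some (σ' b) :=
    Equiv.swap_apply_of_ne_of_ne (by simp) h2
  simp [hP, h3]

lemma succAbove_coe {n : ℕ} (j : Fin (n + 1)) (y : Fin n) :
    ((j.succAbove y : Fin (n + 1)) : ℕ) = if (y : ℕ) < (j : ℕ) then (y : ℕ) else (y : ℕ) + 1 := by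
  by_cases h : y.castSucc < j
  · rw [Fin.succAbove_of_castSucc_lt _ _ h, if_pos (by simpa [Fin.lt_def] using h)]
    simp
  · rw [Fin.succAbove_of_le_castSucc _ _ (not_lt.mp h), if_neg (by simp [Fin.lt_def] at h ⊢; omega)]
    simp

lemma wval_gP_eq (n : ℕ) (j : Fin (n + 1)) (σ' : Equiv.Perm (Fin n)) :
    wval (gP n j σ') (j : ℕ) = n := by
  rw [wval_lt _ j.isLt]
  have h : (⟨(j : ℕ), j.isLt⟩ : Fin (n + 1)) = j := by ext; rfl
  rw [h, gP_apply_self]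
  simp

lemma wval_gP_lt (n : ℕ) (j : Fin (n + 1)) (σ' : Equiv.Perm (Fin n)) {t : ℕ}
    (ht : t < (j : ℕ)) : wval (gP n j σ') t = wval σ' t := by
  have tn : t < n := by have := j.isLt; omega
  rw [wval_lt _ (show t < n + 1 by omega), wval_lt _ tn]
  have h : (⟨t, show t < n + 1 by omega⟩ : Fin (n + 1)) = j.succAbove ⟨t, tn⟩ := by
    ext
    rw [succAbove_coe, if_pos ht]
  rw [h, gP_apply_succAbove]
  simp

lemma wval_gP_gt (n : ℕ) (j : Fin (n + 1)) (σ' : Equiv.Perm (Fin n)) {t : ℕ}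
    (ht : (j : ℕ) < t) (ht' : t ≤ n) : wval (gP n j σ') t = wval σ' (t - 1) := by
  have h1 : t < n + 1 := by omega
  have h2 : t - 1 < n := by omega
  rw [wval_lt _ h1, wval_lt _ h2]
  have h : (⟨t, h1⟩ : Fin (n + 1)) = j.succAbove ⟨t - 1, h2⟩ := by
    ext
    rw [succAbove_coe, if_neg (by simp; omega)]
    simp; omega
  rw [h, gP_apply_succAbove]
  simp

lemma DS_gP_last (n : ℕ) (σ' : Equiv.Perm (Fin n)) :
    DS (gP n (Fin.last n) σ') = (DS σ').map ⟨Fin.castSucc, Fin.castSucc_injective n⟩ := by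
  ext i
  rw [mem_DS]
  simp only [mem_map, Function.Embedding.coeFn_mk]
  by_cases hi : (i : ℕ) < n
  · have hval2 : wval (gP n (Fin.last n) σ') (i : ℕ) = wval σ' (i : ℕ) :=
      wval_gP_lt n _ σ' (by simpa using hi)
    have hval : wval (gP n (Fin.last n) σ') ((i : ℕ) + 1) = wval σ' ((i : ℕ) + 1) := by
      by_cases h2 : (i : ℕ) + 1 < n
      · exact wval_gP_lt n _ σ' (by simpa using h2)
      · have h3 : (i : ℕ) + 1 = n := by omega
        rw [h3, wval_ge σ' (by omega)]
        have h4 : n = ((Fin.last n : Fin (n+1)) : ℕ) := by simp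
        rw [show wval (gP n (Fin.last n) σ') n
            = wval (gP n (Fin.last n) σ') ((Fin.last n : Fin (n+1)) : ℕ) by rw [← h4]]
        rw [wval_gP_eq]
    rw [hval, hval2]
    constructor
    · intro h
      exact ⟨⟨(i : ℕ), hi⟩, mem_DS.mpr h, by ext; simp⟩
    · rintro ⟨y, hy, rfl⟩
      rw [mem_DS] at hy
      simpa using hy
  · have h3 : (i : ℕ) = n := by have := i.isLt; omega
    constructor
    · intro h
      exfalso
      rw [h3, wval_ge _ (by omega)] at h
      have := wval_lt_of_lt (gP n (Fin.last n) σ') (show n < n + 1 by omega)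
      omega
    · rintro ⟨y, hy, hy2⟩
      exfalso
      have := congrArg Fin.val hy2
      simp at this
      omega

lemma DS_gP_lt (n : ℕ) (j : Fin (n + 1)) (hj : (j : ℕ) < n) (σ' : Equiv.Perm (Fin n)) :
    DS (gP n j σ') = insert j (((DS σ').filter fun y : Fin n => (y : ℕ) + 1 ≠ (j : ℕ)).map
      ⟨j.succAbove, Fin.succAbove_right_injective⟩) := by
  ext i
  rw [mem_DS]
  simp only [mem_insert, mem_map, mem_filter, Function.Embedding.coeFn_mk]
  rcases lt_trichotomy (i : ℕ) (j : ℕ) with hij | hij | hij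
  · -- i < j
    have hin : (i : ℕ) < n := by omega
    have hval2 : wval (gP n j σ') (i : ℕ) = wval σ' (i : ℕ) := wval_gP_lt n j σ' hij
    by_cases h2 : (i : ℕ) + 1 = (j : ℕ)
    · -- removed descent position
      have hval : wval (gP n j σ') ((i : ℕ) + 1) = n := by rw [h2, wval_gP_eq]
      rw [hval, hval2]
      constructor
      · intro h
        exfalso
        have := wval_lt_of_lt σ' hin
        omega
      · rintro (h | ⟨y, ⟨_, hy2⟩, hy3⟩)
        · exfalso; rw [h] at hij; omega
        · exfalso
          have hv := congrArg Fin.val hy3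
          rw [succAbove_coe] at hv
          split at hv <;> omega
    · -- i + 1 < j
      have h3 : (i : ℕ) + 1 < (j : ℕ) := by omega
      have hval : wval (gP n j σ') ((i : ℕ) + 1) = wval σ' ((i : ℕ) + 1) :=
        wval_gP_lt n j σ' h3
      rw [hval, hval2]
      constructor
      · intro h
        refine Or.inr ⟨⟨(i : ℕ), hin⟩, ⟨mem_DS.mpr h, by simpa using h2⟩, ?_⟩
        ext
        rw [succAbove_coe]
        simp [hij]
      · rintro (h | ⟨y, ⟨hy1, hy2⟩, hy3⟩)
        · exfalso; rw [h] at hij; omega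
        · have hv := congrArg Fin.val hy3
          rw [succAbove_coe] at hv
          rw [mem_DS] at hy1
          split at hv
          · have : (y : ℕ) = (i : ℕ) := hv
            rw [← this]; exact hy1
          · exfalso; omega
  · -- i = j
    have hi : i = j := Fin.val_injective hij
    have hval : wval (gP n j σ') ((i : ℕ) + 1) = wval σ' (i : ℕ) := by
      rw [hij, wval_gP_gt n j σ' (by omega) (by omega)]
      congr 1
    have hval2 : wval (gP n j σ') (i : ℕ) = n := by rw [hij, wval_gP_eq]
    rw [hval, hval2]
    have := wval_lt_of_lt σ' (show (i : ℕ) < n by omega)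
    constructor
    · intro _; exact Or.inl hi
    · intro _; omega
  · -- i > j
    have hi1 : 1 ≤ (i : ℕ) := by omega
    by_cases h2 : (i : ℕ) < n
    · have hval2 : wval (gP n j σ') (i : ℕ) = wval σ' ((i : ℕ) - 1) :=
        wval_gP_gt n j σ' hij (by omega)
      have hval : wval (gP n j σ') ((i : ℕ) + 1) = wval σ' (i : ℕ) := by
        rw [wval_gP_gt n j σ' (by omega) (by omega)]
        congr 1
      rw [hval, hval2]
      constructor
      · intro h
        refine Or.inr ⟨⟨(i : ℕ) - 1, by omega⟩, ⟨mem_DS.mpr ?_, by simp; omega⟩, ?_⟩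
        · show wval σ' (((i : ℕ) - 1) + 1) + 1 ≤ wval σ' ((i : ℕ) - 1)
          rwa [show ((i : ℕ) - 1) + 1 = (i : ℕ) by omega]
        · ext
          rw [succAbove_coe]
          show (if (i : ℕ) - 1 < (j : ℕ) then (i : ℕ) - 1 else (i : ℕ) - 1 + 1) = (i : ℕ)
          rw [if_neg (by omega)]
          omega
      · rintro (h | ⟨y, ⟨hy1, hy2⟩, hy3⟩)
        · exfalso; rw [h] at hij; omega
        · have hv := congrArg Fin.val hy3
          rw [succAbove_coe] at hv
          rw [mem_DS] at hy1
          split at hv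
          · exfalso; omega
          · have hyv : (y : ℕ) = (i : ℕ) - 1 := by omega
            rw [hyv] at hy1
            rwa [show ((i : ℕ) - 1) + 1 = (i : ℕ) by omega] at hy1
    · -- i = n (last position)
      have h3 : (i : ℕ) = n := by have := i.isLt; omega
      have hval : wval (gP n j σ') ((i : ℕ) + 1) = n + 1 := wval_ge _ (by omega)
      rw [hval]
      have := wval_lt_of_lt (gP n j σ') (show (i : ℕ) < n + 1 by omega)
      constructor
      · intro h; exfalso; omega
      · rintro (h | ⟨y, ⟨hy1, hy2⟩, hy3⟩)
        · exfalso; rw [h] at hij; omega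
        · exfalso
          have hv := congrArg Fin.val hy3
          rw [succAbove_coe] at hv
          have := DS_lt hy1
          split at hv <;> omega

lemma rDesc_gP (n : ℕ) (j : Fin (n + 1)) (σ' : Equiv.Perm (Fin n)) :
    rDesc (n + 1) 1 (gP n j σ') =
      if ((j : ℕ) = n ∨ ∃ y ∈ DS σ', (y : ℕ) + 1 = (j : ℕ)) then (DS σ').card
      else (DS σ').card + 1 := by
  rw [rDesc_eq_card_DS]
  by_cases hj : (j : ℕ) = n
  · have hjl : j = Fin.last n := Fin.val_injective (by simpa using hj)
    rw [hjl, DS_gP_last, card_map, if_pos (Or.inl (by simp))]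
  · have hj2 : (j : ℕ) < n := by have := j.isLt; omega
    rw [DS_gP_lt n j hj2 σ']
    have hnot : j ∉ ((DS σ').filter fun y : Fin n => (y : ℕ) + 1 ≠ (j : ℕ)).map
        ⟨j.succAbove, Fin.succAbove_right_injective⟩ := by
      simp only [mem_map, Function.Embedding.coeFn_mk]
      rintro ⟨y, _, hy⟩
      exact j.succAbove_ne y hy
    rw [card_insert_of_notMem hnot, card_map]
    by_cases hstay : ∃ y ∈ DS σ', (y : ℕ) + 1 = (j : ℕ)
    · rw [if_pos (Or.inr hstay)]
      obtain ⟨y0, hy0, hy0v⟩ := hstay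
      have hfil : (DS σ').filter (fun y : Fin n => (y : ℕ) + 1 ≠ (j : ℕ)) = (DS σ').erase y0 := by
        ext y
        simp only [mem_filter, mem_erase]
        constructor
        · rintro ⟨h1, h2⟩
          exact ⟨fun hc => h2 (hc ▸ hy0v), h1⟩
        · rintro ⟨h1, h2⟩
          refine ⟨h2, fun hc => h1 ?_⟩
          exact Fin.val_injective (by omega)
      rw [hfil, card_erase_of_mem hy0]
      have : 0 < (DS σ').card := card_pos.mpr ⟨y0, hy0⟩
      omega
    · rw [if_neg (not_or.mpr ⟨hj, hstay⟩), filter_true_of_mem]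
      intro y hy hc
      exact hstay ⟨y, hy, hc⟩

lemma stayD_card (n : ℕ) (σ' : Equiv.Perm (Fin n)) :
    (univ.filter fun j : Fin (n + 1) =>
        ((j : ℕ) = n ∨ ∃ y ∈ DS σ', (y : ℕ) + 1 = (j : ℕ))).card = (DS σ').card + 1 := by
  have hset : (univ.filter fun j : Fin (n + 1) =>
        ((j : ℕ) = n ∨ ∃ y ∈ DS σ', (y : ℕ) + 1 = (j : ℕ)))
      = insert (Fin.last n) ((DS σ').map ⟨Fin.succ, Fin.succ_injective n⟩) := by
    ext j
    simp only [mem_filter, mem_univ, true_and, mem_insert, mem_map,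
      Function.Embedding.coeFn_mk]
    constructor
    · rintro (h | ⟨y, hy, hyv⟩)
      · exact Or.inl (Fin.val_injective (by simpa using h))
      · exact Or.inr ⟨y, hy, Fin.val_injective (by simpa using hyv)⟩
    · rintro (rfl | ⟨y, hy, rfl⟩)
      · exact Or.inl (by simp)
      · exact Or.inr ⟨y, hy, by simp⟩
  rw [hset, card_insert_of_notMem, card_map]
  simp only [mem_map, Function.Embedding.coeFn_mk]
  rintro ⟨y, hy, hyv⟩
  have hlt := DS_lt hy
  have hv := congrArg Fin.val hyv
  simp at hv
  omega

/-- The common coefficient function (Eulerian-type recursion kernel). -/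
def eul (n m k : ℕ) : ℕ := if k = m then k + 1 else if k + 1 = m then n - k else 0

lemma count_fiber {n : ℕ} (g : Fin (n + 1) → ℕ) (k : ℕ) (S : Finset (Fin (n + 1)))
    (hS : S.card = k + 1) (hg : ∀ j, g j = if j ∈ S then k else k + 1) (m : ℕ) :
    (univ.filter fun j => g j = m).card = eul n m k := by
  have hk : k + 1 ≤ n + 1 := by
    calc k + 1 = S.card := hS.symm
      _ ≤ (univ : Finset (Fin (n + 1))).card := card_le_card (subset_univ S)
      _ = n + 1 := by simp
  unfold eul
  by_cases h1 : k = m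
  · rw [if_pos h1]
    have hfe : (univ.filter fun j => g j = m) = S := by
      ext j
      simp only [mem_filter, mem_univ, true_and, hg j]
      split <;> constructor <;> intro h <;> first | omega | assumption | tauto
    rw [hfe, hS, h1]
  · rw [if_neg h1]
    by_cases h2 : k + 1 = m
    · rw [if_pos h2]
      have hfe : (univ.filter fun j => g j = m) = Sᶜ := by
        ext j
        simp only [mem_filter, mem_univ, true_and, hg j, mem_compl]
        split <;> constructor <;> intro h <;> first | omega | assumption | tauto
      rw [hfe, card_compl, hS]
      simp only [Fintype.card_fin]
      omega
    · rw [if_neg h2]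
      have hfe : (univ.filter fun j => g j = m) = ∅ := by
        ext j
        simp only [mem_filter, mem_univ, true_and, hg j, notMem_empty, iff_false]
        split <;> omega
      rw [hfe, card_empty]

lemma countD (n : ℕ) (σ' : Equiv.Perm (Fin n)) (m : ℕ) :
    (univ.filter fun j : Fin (n + 1) => rDesc (n + 1) 1 (gP n j σ') = m).card
      = eul n m (rDesc n 1 σ') := by
  rw [rDesc_eq_card_DS n σ']
  refine count_fiber _ _ (univ.filter fun j : Fin (n + 1) =>
      ((j : ℕ) = n ∨ ∃ y ∈ DS σ', (y : ℕ) + 1 = (j : ℕ))) (stayD_card n σ') (fun j => ?_) m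
  rw [rDesc_gP]
  exact if_congr (by simp) rfl rfl

lemma ES_hP_last (n : ℕ) (σ' : Equiv.Perm (Fin n)) :
    ES (hP n (Fin.last n) σ') = (ES σ').map ⟨Fin.castSucc, Fin.castSucc_injective n⟩ := by
  ext i
  rw [mem_ES]
  simp only [mem_map, Function.Embedding.coeFn_mk]
  rcases Fin.eq_castSucc_or_eq_last i with ⟨b, rfl⟩ | rfl
  · rw [hP_apply_castSucc_ne n _ σ' b (Fin.castSucc_lt_last _).ne]
    simp only [Fin.coe_castSucc]
    constructor
    · intro h
      exact ⟨b, mem_ES.mpr h, rfl⟩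
    · rintro ⟨a, ha, haa⟩
      have : a = b := Fin.castSucc_injective n haa
      subst this
      exact mem_ES.mp ha
  · rw [hP_apply_last]
    simp only [Fin.val_last]
    constructor
    · intro h; omega
    · rintro ⟨a, _, haa⟩
      exact absurd haa (Fin.castSucc_lt_last a).ne

lemma ES_hP_castSucc (n : ℕ) (a : Fin n) (σ' : Equiv.Perm (Fin n)) :
    ES (hP n a.castSucc σ') = insert ((σ'.symm a).castSucc)
      (((ES σ').erase (σ'.symm a)).map ⟨Fin.castSucc, Fin.castSucc_injective n⟩) := by
  ext i
  rw [mem_ES]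
  simp only [mem_insert, mem_map, mem_erase, Function.Embedding.coeFn_mk]
  rcases Fin.eq_castSucc_or_eq_last i with ⟨b, rfl⟩ | rfl
  · by_cases hb : b = σ'.symm a
    · subst hb
      rw [hP_apply_castSucc_eq n _ σ' _ (by rw [Equiv.apply_symm_apply])]
      simp only [Fin.val_last, Fin.coe_castSucc]
      have := (σ'.symm a).isLt
      constructor
      · intro _; exact Or.inl (by trivial)
      · intro _; omega
    · have hne : (σ' b).castSucc ≠ a.castSucc := by
        intro hc
        exact hb (by rw [← Equiv.symm_apply_apply σ' b, Fin.castSucc_injective n hc])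
      rw [hP_apply_castSucc_ne n _ σ' b hne]
      simp only [Fin.coe_castSucc]
      constructor
      · intro h
        exact Or.inr ⟨b, ⟨hb, mem_ES.mpr h⟩, rfl⟩
      · rintro (h | ⟨c, ⟨_, hc2⟩, hc3⟩)
        · exact absurd (Fin.castSucc_injective n h) hb
        · have : c = b := Fin.castSucc_injective n hc3
          subst this
          exact mem_ES.mp hc2
  · rw [hP_apply_last]
    simp only [Fin.val_last, Fin.coe_castSucc]
    have := a.isLt
    constructor
    · intro h; omega
    · rintro (h | ⟨c, _, hc⟩)
      · exact absurd h.symm (Fin.castSucc_lt_last _).ne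
      · exact absurd hc (Fin.castSucc_lt_last c).ne

lemma rExc_hP (n : ℕ) (y : Fin (n + 1)) (σ' : Equiv.Perm (Fin n)) :
    rExc (n + 1) 1 (hP n y σ') =
      if (y = Fin.last n ∨ ∃ b ∈ ES σ', (σ' b).castSucc = y) then (ES σ').card
      else (ES σ').card + 1 := by
  rw [rExc_eq_card_ES]
  rcases Fin.eq_castSucc_or_eq_last y with ⟨a, rfl⟩ | rfl
  · rw [ES_hP_castSucc n a σ']
    have hnot : (σ'.symm a).castSucc ∉ ((ES σ').erase (σ'.symm a)).map
        ⟨Fin.castSucc, Fin.castSucc_injective n⟩ := by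
      simp only [mem_map, mem_erase, Function.Embedding.coeFn_mk]
      rintro ⟨c, ⟨hc, _⟩, hc2⟩
      exact hc (Fin.castSucc_injective n hc2)
    rw [card_insert_of_notMem hnot, card_map]
    by_cases hm : σ'.symm a ∈ ES σ'
    · rw [if_pos (Or.inr ⟨σ'.symm a, hm, by rw [Equiv.apply_symm_apply]⟩)]
      rw [card_erase_of_mem hm]
      have : 0 < (ES σ').card := card_pos.mpr ⟨_, hm⟩
      omega
    · rw [erase_eq_of_notMem hm, if_neg]
      rintro (h | ⟨b, hb, hbv⟩)
      · exact absurd h (Fin.castSucc_lt_last _).ne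
      · have : σ' b = a := Fin.castSucc_injective n hbv
        exact hm (by rw [← this, Equiv.symm_apply_apply]; exact hb)
  · rw [ES_hP_last, card_map, if_pos (Or.inl rfl)]

lemma stayE_card (n : ℕ) (σ' : Equiv.Perm (Fin n)) :
    (univ.filter fun y : Fin (n + 1) =>
        (y = Fin.last n ∨ ∃ b ∈ ES σ', (σ' b).castSucc = y)).card = (ES σ').card + 1 := by
  have hset : (univ.filter fun y : Fin (n + 1) =>
        (y = Fin.last n ∨ ∃ b ∈ ES σ', (σ' b).castSucc = y))
      = insert (Fin.last n) ((ES σ').map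
          ⟨fun b => (σ' b).castSucc, (Fin.castSucc_injective n).comp σ'.injective⟩) := by
    ext y
    simp only [mem_filter, mem_univ, true_and, mem_insert, mem_map,
      Function.Embedding.coeFn_mk]
  rw [hset, card_insert_of_notMem, card_map]
  simp only [mem_map, Function.Embedding.coeFn_mk]
  rintro ⟨b, _, hb⟩
  exact absurd hb (Fin.castSucc_lt_last _).ne

lemma countE (n : ℕ) (σ' : Equiv.Perm (Fin n)) (m : ℕ) :
    (univ.filter fun y : Fin (n + 1) => rExc (n + 1) 1 (hP n y σ') = m).card
      = eul n m (rExc n 1 σ') := by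
  rw [rExc_eq_card_ES n σ']
  refine count_fiber _ _ (univ.filter fun y : Fin (n + 1) =>
      (y = Fin.last n ∨ ∃ b ∈ ES σ', (σ' b).castSucc = y)) (stayE_card n σ') (fun y => ?_) m
  rw [rExc_hP]
  exact if_congr (by simp) rfl rfl

lemma gP_inj (n : ℕ) :
    Function.Injective (fun p : Fin (n + 1) × Equiv.Perm (Fin n) => gP n p.1 p.2) := by
  rintro ⟨j, σ'⟩ ⟨k, τ'⟩ h
  simp only at h
  have hj : j = k := by
    have h1 := gP_apply_self n j σ'
    rw [h] at h1
    have h2 := gP_apply_self n k τ'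
    exact (gP n k τ').injective (h1.trans h2.symm)
  subst hj
  suffices hs : σ' = τ' by rw [hs]
  apply Equiv.ext
  intro y
  have h3 : gP n j σ' (j.succAbove y) = gP n j τ' (j.succAbove y) := by rw [h]
  rw [gP_apply_succAbove, gP_apply_succAbove] at h3
  exact Fin.castSucc_injective n h3

lemma gP_surj (n : ℕ) (σ : Equiv.Perm (Fin (n + 1))) : ∃ j σ', gP n j σ' = σ := by
  set j := σ.symm (Fin.last n) with hjdef
  set e : Option (Fin n) ≃ Option (Fin n) :=
    (finSuccEquiv' j).symm.trans (σ.trans finSuccEquivLast) with hedef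
  have he : e none = none := by
    simp [hedef, hjdef, Equiv.trans_apply]
  have h3 := Equiv.Perm.decomposeOption.symm_apply_apply e
  rw [Equiv.Perm.decomposeOption_apply, Equiv.Perm.decomposeOption_symm_apply] at h3
  have h4 : (Equiv.removeNone e).optionCongr = e := by
    apply Equiv.ext
    intro x
    have h5 := Equiv.ext_iff.mp h3 x
    rw [he, Equiv.swap_self] at h5
    simpa using h5
  refine ⟨j, Equiv.removeNone e, ?_⟩
  unfold gP
  rw [h4, hedef]
  apply Equiv.ext
  intro x
  simp [Equiv.trans_apply]

lemma hP_inj (n : ℕ) :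
    Function.Injective (fun p : Fin (n + 1) × Equiv.Perm (Fin n) => hP n p.1 p.2) := by
  rintro ⟨y, σ'⟩ ⟨z, τ'⟩ h
  simp only at h
  have hy : y = z := by
    have h1 := hP_apply_last n y σ'
    rw [h] at h1
    have h2 := hP_apply_last n z τ'
    exact h1.symm.trans h2
  subst hy
  suffices hs : σ' = τ' by rw [hs]
  apply Equiv.ext
  intro b
  have h3 : hP n y σ' b.castSucc = hP n y τ' b.castSucc := by rw [h]
  by_cases hb : (σ' b).castSucc = y
  · by_cases hc : (τ' b).castSucc = y
    · exact Fin.castSucc_injective n (hb.trans hc.symm)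
    · rw [hP_apply_castSucc_eq n y σ' b hb, hP_apply_castSucc_ne n y τ' b hc] at h3
      exact absurd h3.symm (Fin.castSucc_lt_last _).ne
  · by_cases hc : (τ' b).castSucc = y
    · rw [hP_apply_castSucc_ne n y σ' b hb, hP_apply_castSucc_eq n y τ' b hc] at h3
      exact absurd h3 (Fin.castSucc_lt_last _).ne
    · rw [hP_apply_castSucc_ne n y σ' b hb, hP_apply_castSucc_ne n y τ' b hc] at h3
      exact Fin.castSucc_injective n h3

lemma hP_surj (n : ℕ) (σ : Equiv.Perm (Fin (n + 1))) : ∃ y σ', hP n y σ' = σ := by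
  set y := σ (Fin.last n) with hydef
  set e : Option (Fin n) ≃ Option (Fin n) :=
    finSuccEquivLast.symm.trans (σ.trans finSuccEquivLast) with hedef
  have he : e none = finSuccEquivLast y := by
    simp [hedef, hydef, Equiv.trans_apply]
  have h3 := Equiv.Perm.decomposeOption.symm_apply_apply e
  rw [Equiv.Perm.decomposeOption_apply, Equiv.Perm.decomposeOption_symm_apply] at h3
  rw [he, Equiv.Perm.mul_def] at h3
  refine ⟨y, Equiv.removeNone e, ?_⟩
  unfold hP
  rw [h3, hedef]
  apply Equiv.ext
  intro x
  simp [Equiv.trans_apply]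

lemma card_filter_prod {A B : Type*} [Fintype A] [Fintype B] (Q : A × B → Prop)
    [DecidablePred Q] :
    ((Finset.univ : Finset (A × B)).filter Q).card
      = ∑ b : B, (Finset.univ.filter fun a => Q (a, b)).card := by
  rw [Finset.card_filter, ← Finset.univ_product_univ, Finset.sum_product_right]
  exact Finset.sum_congr rfl fun b _ => (Finset.card_filter _ _).symm

lemma card_via_gP (n m : ℕ) :
    (univ.filter fun σ : Equiv.Perm (Fin (n + 1)) => rDesc (n + 1) 1 σ = m).card
      = ∑ σ' : Equiv.Perm (Fin n),
          (univ.filter fun j : Fin (n + 1) => rDesc (n + 1) 1 (gP n j σ') = m).card := by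
  rw [← card_filter_prod (fun p : Fin (n + 1) × Equiv.Perm (Fin n) =>
    rDesc (n + 1) 1 (gP n p.1 p.2) = m)]
  refine (Finset.card_bij (fun p _ => gP n p.1 p.2) ?_ ?_ ?_).symm
  · intro p hp
    exact mem_filter.mpr ⟨mem_univ _, (mem_filter.mp hp).2⟩
  · intro p _ q _ h
    exact gP_inj n h
  · intro σ hσ
    obtain ⟨j, σ', rfl⟩ := gP_surj n σ
    exact ⟨(j, σ'), by simpa using (mem_filter.mp hσ).2, rfl⟩

lemma card_via_hP (n m : ℕ) :
    (univ.filter fun σ : Equiv.Perm (Fin (n + 1)) => rExc (n + 1) 1 σ = m).card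
      = ∑ σ' : Equiv.Perm (Fin n),
          (univ.filter fun y : Fin (n + 1) => rExc (n + 1) 1 (hP n y σ') = m).card := by
  rw [← card_filter_prod (fun p : Fin (n + 1) × Equiv.Perm (Fin n) =>
    rExc (n + 1) 1 (hP n p.1 p.2) = m)]
  refine (Finset.card_bij (fun p _ => hP n p.1 p.2) ?_ ?_ ?_).symm
  · intro p hp
    exact mem_filter.mpr ⟨mem_univ _, (mem_filter.mp hp).2⟩
  · intro p _ q _ h
    exact hP_inj n h
  · intro σ hσ
    obtain ⟨y, σ', rfl⟩ := hP_surj n σ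
    exact ⟨(y, σ'), by simpa using (mem_filter.mp hσ).2, rfl⟩

lemma sum_stat {α : Type*} [Fintype α] (s : α → ℕ) (N : ℕ) (hs : ∀ a, s a < N) (g : ℕ → ℕ) :
    ∑ a : α, g (s a) = ∑ k ∈ Finset.range N, (univ.filter fun a => s a = k).card * g k := by
  rw [← Finset.sum_fiberwise_of_maps_to (fun a _ => Finset.mem_range.mpr (hs a))
    (fun a => g (s a))]
  refine Finset.sum_congr rfl fun k _ => ?_
  rw [Finset.sum_congr rfl (fun a ha => by rw [(Finset.mem_filter.mp ha).2] :
    ∀ a ∈ univ.filter (fun a => s a = k), g (s a) = g k), Finset.sum_const, smul_eq_mul]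

lemma rDesc_lt (n : ℕ) (σ : Equiv.Perm (Fin n)) : rDesc n 1 σ < n + 1 := by
  rw [rDesc_eq_card_DS]
  have := Finset.card_filter_le (univ : Finset (Fin n))
    (fun i : Fin n => wval σ ((i : ℕ) + 1) + 1 ≤ wval σ (i : ℕ))
  simp only [Finset.card_univ, Fintype.card_fin] at this
  have h2 : (DS σ).card ≤ n := this
  omega

lemma rExc_lt (n : ℕ) (σ : Equiv.Perm (Fin n)) : rExc n 1 σ < n + 1 := by
  rw [rExc_eq_card_ES]
  have := Finset.card_filter_le (univ : Finset (Fin n))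
    (fun i : Fin n => (i : ℕ) + 1 ≤ (σ i : ℕ))
  simp only [Finset.card_univ, Fintype.card_fin] at this
  have h2 : (ES σ).card ≤ n := this
  omega

/-- The number of permutations of `[n]` with `m` descents equals the number with
`m` excedances. -/
theorem stmt18 (n m : ℕ) :
    (Finset.univ.filter fun σ : Equiv.Perm (Fin n) => rDesc n 1 σ = m).card =
    (Finset.univ.filter fun σ : Equiv.Perm (Fin n) => rExc n 1 σ = m).card := by
  induction n generalizing m with
  | zero =>
    have h1 : ∀ σ : Equiv.Perm (Fin 0), rDesc 0 1 σ = 0 := by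
      intro σ
      rw [rDesc_eq_card_DS]
      simp [DS]
    have h2 : ∀ σ : Equiv.Perm (Fin 0), rExc 0 1 σ = 0 := by
      intro σ
      rw [rExc_eq_card_ES]
      simp [ES]
    simp only [h1, h2]
  | succ n ih =>
    have hA : (univ.filter fun σ : Equiv.Perm (Fin (n + 1)) => rDesc (n + 1) 1 σ = m).card
        = ∑ σ' : Equiv.Perm (Fin n), eul n m (rDesc n 1 σ') := by
      rw [card_via_gP n m]
      exact Finset.sum_congr rfl fun σ' _ => countD n σ' m
    have hB : (univ.filter fun σ : Equiv.Perm (Fin (n + 1)) => rExc (n + 1) 1 σ = m).card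
        = ∑ σ' : Equiv.Perm (Fin n), eul n m (rExc n 1 σ') := by
      rw [card_via_hP n m]
      exact Finset.sum_congr rfl fun σ' _ => countE n σ' m
    rw [hA, hB,
      sum_stat (fun σ' : Equiv.Perm (Fin n) => rDesc n 1 σ') (n + 1)
        (fun σ' => rDesc_lt n σ') (eul n m),
      sum_stat (fun σ' : Equiv.Perm (Fin n) => rExc n 1 σ') (n + 1)
        (fun σ' => rExc_lt n σ') (eul n m)]
    exact Finset.sum_congr rfl fun k _ => by rw [ih k]
end
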